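/- arXiv:1805.10112 — 3 statements merged into one kernel-verified Lean document; each statement's English description precedes it below -/
import Mathlib

section
/- Let G = (V,E) be a finite connected simple graph with at least one edge. Then G is homogeneous (i.e., there exists a pmf μ on Γ_G whose edge usage probability η_μ is constant on E) if and only if every feasible partition P of G satisfies |E_P|/(k_P − 1) ≥ |E|/(|V| − 1). -/
noncomputable section
open scoped Classical
open Finset

variable {V : Type*} [Fintype V] [DecidableEq V]

/-- A pmf on a finite family `Γ` of edge sets. -/
def IsPmf (Γ : Finset (Finset (Sym2 V))) (μ : Finset (Sym2 V) → ℝ) : Prop :=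
  (∀ γ, 0 ≤ μ γ) ∧ (∀ γ, γ ∉ Γ → μ γ = 0) ∧ ∑ γ ∈ Γ, μ γ = 1

/-- Edge usage probability. -/
def eta (Γ : Finset (Finset (Sym2 V))) (μ : Finset (Sym2 V) → ℝ) (e : Sym2 V) : ℝ :=
  ∑ γ ∈ Γ.filter (fun γ => e ∈ γ), μ γ

/-- Expected overlap. -/
def EO (Γ : Finset (Finset (Sym2 V))) (μ : Finset (Sym2 V) → ℝ) : ℝ :=
  ∑ γ ∈ Γ, ∑ γ' ∈ Γ, ((γ ∩ γ').card : ℝ) * μ γ * μ γ'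

/-- Minimum expected overlap. -/
def MEO (Γ : Finset (Finset (Sym2 V))) : ℝ :=
  sInf {x : ℝ | ∃ μ, IsPmf Γ μ ∧ x = EO Γ μ}

/-- The set of spanning trees of `G`, as finsets of edges. -/
def spanningTrees (G : SimpleGraph V) : Finset (Finset (Sym2 V)) :=
  Finset.univ.filter (fun γ => ↑γ ⊆ G.edgeSet ∧
    (SimpleGraph.fromEdgeSet (↑γ : Set (Sym2 V))).Connected ∧
    γ.card = Fintype.card V - 1)

/-- Edges of `G` with both endpoints in `W`. -/
def edgesWithin (G : SimpleGraph V) (W : Finset V) : Finset (Sym2 V) :=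
  G.edgeFinset.filter (fun e => ∀ v ∈ e, v ∈ W)

/-- `γ` is a spanning tree of the subgraph of `G` induced by the vertex set `W`. -/
def IsSpanningTreeOn (G : SimpleGraph V) (W : Finset V) (γ : Finset (Sym2 V)) : Prop :=
  γ ⊆ edgesWithin G W ∧
    ((SimpleGraph.fromEdgeSet (↑γ : Set (Sym2 V))).induce (↑W : Set V)).Connected ∧
    γ.card = W.card - 1

def spanningTreesOn (G : SimpleGraph V) (W : Finset V) : Finset (Finset (Sym2 V)) :=
  Finset.univ.filter (IsSpanningTreeOn G W)

def Adm (Γ : Finset (Finset (Sym2 V))) (ρ : Sym2 V → ℝ) : Prop :=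
  (∀ e, 0 ≤ ρ e) ∧ ∀ γ ∈ Γ, 1 ≤ ∑ e ∈ γ, ρ e

def Mod2 (Eset : Finset (Sym2 V)) (Γ : Finset (Finset (Sym2 V))) : ℝ :=
  sInf {x : ℝ | ∃ ρ, Adm Γ ρ ∧ x = ∑ e ∈ Eset, (ρ e) ^ 2}

/-- A fair spanning tree. -/
def IsFair (G : SimpleGraph V) (γ : Finset (Sym2 V)) : Prop :=
  ∃ μ, IsPmf (spanningTrees G) μ ∧ EO (spanningTrees G) μ = MEO (spanningTrees G) ∧ 0 < μ γ

def IsFeasiblePartition (G : SimpleGraph V) (P : Finset (Finset V)) : Prop :=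
  2 ≤ P.card ∧ (∀ p ∈ P, p.Nonempty) ∧ (∀ v : V, ∃! p, p ∈ P ∧ v ∈ p) ∧
    ∀ p ∈ P, (G.induce (↑p : Set V)).Connected

/-- The edges of `G` joining distinct parts of the partition `P`. -/
def cutEdges (G : SimpleGraph V) (P : Finset (Finset V)) : Finset (Sym2 V) :=
  G.edgeFinset.filter (fun e => ¬ ∃ p ∈ P, ∀ v ∈ e, v ∈ p)

/-- `G` is homogeneous. -/
def IsHomogeneous (G : SimpleGraph V) : Prop :=
  ∃ μ, IsPmf (spanningTrees G) μ ∧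
    ∃ c : ℝ, ∀ e ∈ G.edgeFinset, eta (spanningTrees G) μ e = c


/-!
If `η_μ ≡ c`, summing `η_μ` over `E` gives `c |E| = |V| - 1`, while every spanning tree has at
least `k_P - 1` edges in `E_P`, so `c |E_P| ≥ k_P - 1`; eliminating `c` gives the bound.

Conversely, homogeneity says that the constant vector `(|V| - 1) / |E|` on `E` lies in the
spanning tree polytope. By separation it suffices that for every weight `w` some spanning tree
has weight at most `(|V| - 1) / |E| · w(E)`, and Kruskal's tree does. Applied to the components
of any `A ⊆ E`, the partition bound says that the rank `|V| - c(A)` of `A`, where `c(A)` counts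
the components of `(V, A)`, is at least `(|V| - 1) / |E| · |A|`. Kruskal's tree meets every
initial segment of the edges sorted by weight in a maximal forest, so adding the edges in that
order (a discrete Abel summation) gives the weight bound.
-/

open SimpleGraph

theorem Nat.card_eq_card_add_one_of_bijOn {α β : Type*} [Finite α] {f : α → β} {a : α}
    (h : Set.BijOn f {a}ᶜ Set.univ) : Nat.card α = Nat.card β + 1 := by
  have hcompl : ({a}ᶜ : Set α).ncard = Nat.card β := by
    rw [← Set.ncard_univ, ← h.image_eq, h.injOn.ncard_image]
  rw [Set.ncard_compl, Set.ncard_singleton] at hcompl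
  have : 0 < Nat.card α := Nat.card_pos_iff.2 ⟨⟨a⟩, inferInstance⟩
  omega

section EdgeGraph

variable {α : Type*}

def edgeGraph (A : Finset (Sym2 α)) : SimpleGraph α := fromEdgeSet ↑A

def numComponents (A : Finset (Sym2 α)) : ℕ := Nat.card (edgeGraph A).ConnectedComponent

theorem edgeGraph_adj {A : Finset (Sym2 α)} {x y : α} :
    (edgeGraph A).Adj x y ↔ s(x, y) ∈ A ∧ x ≠ y := by
  simp [edgeGraph]

theorem edgeGraph_mono {A B : Finset (Sym2 α)} (h : A ⊆ B) : edgeGraph A ≤ edgeGraph B :=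
  fromEdgeSet_mono (coe_subset.2 h)

theorem edgeGraph_edgeFinset (G : SimpleGraph α) [Fintype G.edgeSet] :
    edgeGraph G.edgeFinset = G := by
  simp [edgeGraph]

theorem edgeGraph_le {G : SimpleGraph α} [Fintype G.edgeSet] {A : Finset (Sym2 α)}
    (h : A ⊆ G.edgeFinset) : edgeGraph A ≤ G :=
  edgeGraph_edgeFinset G ▸ edgeGraph_mono h

theorem reachable_edgeGraph_of_mem {A : Finset (Sym2 α)} {u v : α} (h : s(u, v) ∈ A) :
    (edgeGraph A).Reachable u v := by
  by_cases huv : u = v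
  · exact huv ▸ Reachable.refl u
  · exact (edgeGraph_adj.2 ⟨h, huv⟩).reachable

theorem reachable_edgeGraph_insert_iff [DecidableEq α] {A : Finset (Sym2 α)} {u v x y : α} :
    (edgeGraph (insert s(u, v) A)).Reachable x y ↔
      (edgeGraph A).Reachable x y ∨
        ((edgeGraph A).Reachable x u ∨ (edgeGraph A).Reachable x v) ∧
          ((edgeGraph A).Reachable y u ∨ (edgeGraph A).Reachable y v) := by
  set R := (edgeGraph A).Reachable
  constructor
  · rintro ⟨p⟩
    induction p with
    | nil => exact Or.inl (Reachable.refl _)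
    | @cons a b c hab _ ih =>
      obtain ⟨hmem, hne⟩ := edgeGraph_adj.1 hab
      have hstep : R a b ∨ a = u ∧ b = v ∨ a = v ∧ b = u := by
        rcases mem_insert.1 hmem with h | h
        · exact Or.inr (Sym2.eq_iff.1 h)
        · exact Or.inl (edgeGraph_adj.2 ⟨h, hne⟩).reachable
      rcases hstep with hab | ⟨rfl, rfl⟩ | ⟨rfl, rfl⟩ <;> rcases ih with h | ⟨hb, hc⟩
      · exact Or.inl (hab.trans h)
      · exact Or.inr ⟨hb.imp hab.trans hab.trans, hc⟩
      · exact Or.inr ⟨Or.inl (Reachable.refl _), Or.inr h.symm⟩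
      · exact Or.inr ⟨Or.inl (Reachable.refl _), hc⟩
      · exact Or.inr ⟨Or.inr (Reachable.refl _), Or.inl h.symm⟩
      · exact Or.inr ⟨Or.inr (Reachable.refl _), hc⟩
  · have hmono : ∀ {z z'}, R z z' → (edgeGraph (insert s(u, v) A)).Reachable z z' :=
      (·.mono (edgeGraph_mono (subset_insert _ _)))
    have huv : (edgeGraph (insert s(u, v) A)).Reachable u v :=
      reachable_edgeGraph_of_mem (mem_insert_self _ _)
    have hnear : ∀ z, R z u ∨ R z v → (edgeGraph (insert s(u, v) A)).Reachable z u :=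
      fun z hz => hz.elim hmono fun h => (hmono h).trans huv.symm
    rintro (h | ⟨hx, hy⟩)
    · exact hmono h
    · exact (hnear x hx).trans (hnear y hy).symm

theorem reachable_edgeGraph_insert_of_reachable [DecidableEq α] {A : Finset (Sym2 α)} {u v : α}
    (h : (edgeGraph A).Reachable u v) :
    (edgeGraph (insert s(u, v) A)).Reachable = (edgeGraph A).Reachable := by
  ext x y
  rw [reachable_edgeGraph_insert_iff]
  refine or_iff_left_of_imp fun ⟨hx, hy⟩ => ?_
  have hnear : ∀ z, (edgeGraph A).Reachable z u ∨ (edgeGraph A).Reachable z v →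
      (edgeGraph A).Reachable z u := fun z hz => hz.elim id (·.trans h.symm)
  exact (hnear x hx).trans (hnear y hy).symm

theorem numComponents_congr {A B : Finset (Sym2 α)}
    (h : (edgeGraph A).Reachable = (edgeGraph B).Reachable) : numComponents A = numComponents B :=
  Nat.card_congr (Quot.congrRight fun x y => by rw [h])

theorem numComponents_insert_add_one [DecidableEq α] [Finite α] {A : Finset (Sym2 α)} {u v : α}
    (h : ¬(edgeGraph A).Reachable u v) :
    numComponents (insert s(u, v) A) + 1 = numComponents A := by
  set H := edgeGraph A
  have hle : H ≤ edgeGraph (insert s(u, v) A) := edgeGraph_mono (subset_insert _ _)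
  refine (Nat.card_eq_card_add_one_of_bijOn (f := ConnectedComponent.map (Hom.ofLE hle))
    (a := H.connectedComponentMk v) ⟨Set.mapsTo_univ _ _, ?_, ?_⟩).symm
  · intro C hC D hD hCD
    induction C using ConnectedComponent.ind with | _ x =>
    induction D using ConnectedComponent.ind with | _ y =>
    simp only [Set.mem_compl_singleton_iff, ne_eq, ConnectedComponent.eq] at hC hD
    simp only [ConnectedComponent.map_mk, Hom.coe_ofLE, id_eq, ConnectedComponent.eq,
      reachable_edgeGraph_insert_iff] at hCD ⊢
    rcases hCD with hxy | ⟨hx, hy⟩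
    · exact hxy
    · exact (hx.resolve_right hC).trans (hy.resolve_right hD).symm
  · intro C' _
    induction C' using ConnectedComponent.ind with | _ x =>
    by_cases hx : H.Reachable x v
    · refine ⟨H.connectedComponentMk u, by simpa using h, ?_⟩
      simp only [ConnectedComponent.map_mk, Hom.coe_ofLE, id_eq, ConnectedComponent.eq,
        reachable_edgeGraph_insert_iff]
      exact Or.inr ⟨Or.inl (Reachable.refl _), Or.inr hx⟩
    · exact ⟨H.connectedComponentMk x, by simpa using hx, rfl⟩

theorem numComponents_le_insert_add_one [DecidableEq α] [Finite α] (A : Finset (Sym2 α))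
    (e : Sym2 α) : numComponents A ≤ numComponents (insert e A) + 1 := by
  induction e using Sym2.ind with | _ u v =>
  by_cases h : (edgeGraph A).Reachable u v
  · rw [numComponents_congr (reachable_edgeGraph_insert_of_reachable h)]
    omega
  · exact (numComponents_insert_add_one h).ge

theorem numComponents_le_union_add_card [DecidableEq α] [Finite α] (A B : Finset (Sym2 α)) :
    numComponents A ≤ numComponents (A ∪ B) + #B := by
  induction B using Finset.induction_on generalizing A with
  | empty => simp
  | insert e B he ih =>
    have := ih (insert e A)
    rw [insert_union, ← union_insert] at this
    rw [card_insert_of_notMem he]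
    linarith [numComponents_le_insert_add_one A e]

theorem numComponents_empty : numComponents (∅ : Finset (Sym2 α)) = Nat.card α := by
  rw [numComponents, edgeGraph, coe_empty, fromEdgeSet_empty]
  exact (Nat.card_eq_of_bijective _ ⟨fun x y h => reachable_bot.1 (ConnectedComponent.eq.1 h),
    fun C => C.exists_rep⟩).symm

theorem numComponents_le_card [Finite α] (A : Finset (Sym2 α)) : numComponents A ≤ Nat.card α :=
  Nat.card_le_card_of_surjective _ fun C => C.exists_rep

theorem numComponents_eq_one_iff {A : Finset (Sym2 α)} :
    numComponents A = 1 ↔ (edgeGraph A).Connected := by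
  rw [numComponents, Nat.card_eq_one_iff_unique, connected_iff]
  refine and_congr ⟨fun _ x y => ConnectedComponent.eq.1 (Subsingleton.elim _ _),
    Preconnected.subsingleton_connectedComponent⟩
    ⟨fun ⟨C⟩ => ⟨C.out⟩, fun ⟨v⟩ => ⟨(edgeGraph A).connectedComponentMk v⟩⟩

theorem card_le_numComponents [Finite α] {P : Finset (Finset α)}
    (hP : ∀ v, ∃! p, p ∈ P ∧ v ∈ p) (hne : ∀ p ∈ P, p.Nonempty) {A : Finset (Sym2 α)}
    (hA : ∀ e ∈ A, ∃ p ∈ P, ∀ v ∈ e, v ∈ p) : #P ≤ numComponents A := by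
  choose part hpart using hP
  have hadj : ∀ x y, (edgeGraph A).Adj x y → part x = part y := by
    intro x y hxy
    obtain ⟨p, hp, hxyp⟩ := hA _ (edgeGraph_adj.1 hxy).1
    rw [← (hpart x).2 p ⟨hp, hxyp x (Sym2.mem_mk_left x y)⟩,
      ← (hpart y).2 p ⟨hp, hxyp y (Sym2.mem_mk_right x y)⟩]
  have hreach : ∀ x y, (edgeGraph A).Reachable x y → part x = part y := by
    rintro x y ⟨p⟩
    induction p with
    | nil => rfl
    | cons h _ ih => exact (hadj _ _ h).trans ih
  choose rep hrep using hne
  have hpart_rep : ∀ p (hp : p ∈ P), part (rep p hp) = p :=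
    fun p hp => ((hpart _).2 p ⟨hp, hrep p hp⟩).symm
  rw [← Nat.card_eq_finsetCard]
  refine Nat.card_le_card_of_injective (fun p => (edgeGraph A).connectedComponentMk (rep p p.2))
    fun p q hpq => Subtype.ext ?_
  rw [← hpart_rep p p.2, ← hpart_rep q q.2]
  exact hreach _ _ (ConnectedComponent.eq.1 hpq)

/-- `#F + c(F) = |α|` says that `F` is acyclic. -/
def IsSpanningForest (F A : Finset (Sym2 α)) : Prop :=
  F ⊆ A ∧ (edgeGraph F).Reachable = (edgeGraph A).Reachable ∧ #F + numComponents F = Nat.card α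

theorem isSpanningForest_empty : IsSpanningForest (∅ : Finset (Sym2 α)) ∅ :=
  ⟨subset_rfl, rfl, by simp [numComponents_empty]⟩

/-- One step of Kruskal's algorithm: `e` is kept exactly when it joins two components. -/
theorem IsSpanningForest.exists_insert [DecidableEq α] [Finite α] (w : Sym2 α → ℝ)
    {F A : Finset (Sym2 α)} (hF : IsSpanningForest F A) (e : Sym2 α) :
    ∃ F', IsSpanningForest F' (insert e A) ∧ ∑ x ∈ F', w x =
      ∑ x ∈ F, w x + w e * ((numComponents A : ℝ) - numComponents (insert e A)) := by
  obtain ⟨hsub, hreach, hcard⟩ := hF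
  induction e using Sym2.ind with | _ u v =>
  by_cases h : (edgeGraph A).Reachable u v
  · have hA := reachable_edgeGraph_insert_of_reachable h
    refine ⟨F, ⟨hsub.trans (subset_insert _ _), hA ▸ hreach, hcard⟩, ?_⟩
    rw [numComponents_congr hA, sub_self, mul_zero, add_zero]
  · have hF : ¬(edgeGraph F).Reachable u v := hreach ▸ h
    have hnotin : s(u, v) ∉ F := fun hmem => hF (reachable_edgeGraph_of_mem hmem)
    refine ⟨insert s(u, v) F, ⟨insert_subset_insert _ hsub, ?_, ?_⟩, ?_⟩
    · ext x y
      rw [reachable_edgeGraph_insert_iff, reachable_edgeGraph_insert_iff, hreach]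
    · rw [card_insert_of_notMem hnotin, ← hcard, ← numComponents_insert_add_one hF]
      omega
    · rw [sum_insert hnotin, ← numComponents_insert_add_one h]
      push_cast
      ring

/-- Kruskal's algorithm, by induction on the heaviest edge. The factor of `M` is the slack in
the rank condition for `A` itself; it vanishes when that condition is tight. -/
theorem exists_isSpanningForest_weight_le [DecidableEq α] [Finite α] (w : Sym2 α → ℝ) (a b : ℝ)
    (A : Finset (Sym2 α))
    (hrank : ∀ B ⊆ A, a * #B ≤ b * ((Nat.card α : ℝ) - numComponents B))
    (M : ℝ) (hM : ∀ e ∈ A, w e ≤ M) :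
    ∃ F, IsSpanningForest F A ∧ b * ∑ e ∈ F, w e ≤
      a * ∑ e ∈ A, w e + M * (b * ((Nat.card α : ℝ) - numComponents A) - a * #A) := by
  induction A using Finset.induction_on_max_value w generalizing M with
  | empty => exact ⟨∅, isSpanningForest_empty, by simp [numComponents_empty]⟩
  | insert e A he hmax ih =>
    obtain ⟨F, hF, hW⟩ := ih (fun B hB => hrank B (hB.trans (subset_insert _ _))) (w e) hmax
    obtain ⟨F', hF', hW'⟩ := hF.exists_insert w e
    refine ⟨F', hF', ?_⟩
    have hslack := hrank _ subset_rfl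
    rw [card_insert_of_notMem he] at hslack ⊢
    rw [hW', sum_insert he]
    push_cast at hslack ⊢
    calc b * (∑ x ∈ F, w x + w e * (numComponents A - numComponents (insert e A)))
        ≤ a * (w e + ∑ x ∈ A, w x) +
          w e * (b * (Nat.card α - numComponents (insert e A)) - a * (#A + 1)) := by
          linarith
      _ ≤ a * (w e + ∑ x ∈ A, w x) +
          M * (b * (Nat.card α - numComponents (insert e A)) - a * (#A + 1)) := by
          gcongr
          exact hM e (mem_insert_self e A)

end EdgeGraph

theorem mem_spanningTrees {G : SimpleGraph V} {γ : Finset (Sym2 V)} :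
    γ ∈ spanningTrees G ↔
      γ ⊆ G.edgeFinset ∧ (edgeGraph γ).Connected ∧ #γ = Fintype.card V - 1 := by
  rw [spanningTrees, mem_filter, ← coe_edgeFinset, coe_subset]
  exact and_iff_right (mem_univ γ)

theorem card_of_mem_spanningTrees {G : SimpleGraph V} {γ : Finset (Sym2 V)}
    (hγ : γ ∈ spanningTrees G) : (#γ : ℝ) = Fintype.card V - 1 := by
  obtain ⟨-, hconn, hcard⟩ := mem_spanningTrees.1 hγ
  have : 0 < Fintype.card V := Fintype.card_pos_iff.2 hconn.nonempty
  rw [hcard, Nat.cast_sub this, Nat.cast_one]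

theorem IsFeasiblePartition.card_le {α : Type*} [Fintype α] {G : SimpleGraph α}
    {P : Finset (Finset α)} (hP : IsFeasiblePartition G P) : #P ≤ Fintype.card α := by
  rw [← Nat.card_eq_fintype_card, ← numComponents_empty]
  exact card_le_numComponents hP.2.2.1 hP.2.1 (by simp)

/-- A spanning tree with its edges across `P` removed falls apart into at least `|P|` pieces. -/
theorem card_le_card_inter_cutEdges_add_one {G : SimpleGraph V} {γ : Finset (Sym2 V)}
    (hγ : γ ∈ spanningTrees G) {P : Finset (Finset V)} (hP : IsFeasiblePartition G P) :
    #P ≤ #(γ ∩ cutEdges G P) + 1 := by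
  obtain ⟨hsub, hconn, -⟩ := mem_spanningTrees.1 hγ
  have hparts : #P ≤ numComponents (γ \ cutEdges G P) := by
    refine card_le_numComponents hP.2.2.1 hP.2.1 fun e he => ?_
    obtain ⟨heγ, hcut⟩ := mem_sdiff.1 he
    simpa [cutEdges, hsub heγ] using hcut
  have hsplit := numComponents_le_union_add_card (γ \ cutEdges G P) (γ ∩ cutEdges G P)
  rw [sdiff_union_inter, numComponents_eq_one_iff.2 hconn] at hsplit
  omega

theorem sum_eta {α : Type*} [DecidableEq α] (Γ : Finset (Finset (Sym2 α)))
    (μ : Finset (Sym2 α) → ℝ) (S : Finset (Sym2 α)) :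
    ∑ e ∈ S, eta Γ μ e = ∑ γ ∈ Γ, μ γ * #(γ ∩ S) := by
  simp only [eta, sum_filter]
  rw [sum_comm]
  refine sum_congr rfl fun γ _ => ?_
  rw [← sum_filter, sum_const, filter_mem_eq_inter, inter_comm, nsmul_eq_mul, mul_comm]

theorem IsHomogeneous.mul_sub_one_le {G : SimpleGraph V} (h : IsHomogeneous G)
    {P : Finset (Finset V)} (hP : IsFeasiblePartition G P) :
    (#G.edgeFinset : ℝ) * (#P - 1) ≤ #(cutEdges G P) * (Fintype.card V - 1) := by
  obtain ⟨μ, ⟨hμ0, -, hμ1⟩, c, hc⟩ := h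
  have hsum : ∀ S ⊆ G.edgeFinset, ∑ e ∈ S, eta (spanningTrees G) μ e = #S * c := fun S hS => by
    rw [sum_congr rfl fun e he => hc e (hS he), sum_const, nsmul_eq_mul]
  have htotal : (#G.edgeFinset : ℝ) * c = Fintype.card V - 1 := by
    rw [← hsum _ subset_rfl, sum_eta]
    calc ∑ γ ∈ spanningTrees G, μ γ * #(γ ∩ G.edgeFinset)
        = ∑ γ ∈ spanningTrees G, μ γ * (Fintype.card V - 1) := by
          refine sum_congr rfl fun γ hγ => ?_
          rw [inter_eq_left.2 (mem_spanningTrees.1 hγ).1, card_of_mem_spanningTrees hγ]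
      _ = Fintype.card V - 1 := by rw [← sum_mul, hμ1, one_mul]
  have hcut : (#P : ℝ) - 1 ≤ #(cutEdges G P) * c := by
    rw [← hsum (cutEdges G P) (filter_subset _ _), sum_eta]
    calc (#P : ℝ) - 1 = ∑ γ ∈ spanningTrees G, μ γ * (#P - 1) := by rw [← sum_mul, hμ1, one_mul]
      _ ≤ ∑ γ ∈ spanningTrees G, μ γ * #(γ ∩ cutEdges G P) := by
        refine sum_le_sum fun γ hγ => mul_le_mul_of_nonneg_left ?_ (hμ0 γ)
        have := card_le_card_inter_cutEdges_add_one hγ hP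
        rw [sub_le_iff_le_add]
        exact_mod_cast this
  calc (#G.edgeFinset : ℝ) * (#P - 1) ≤ #G.edgeFinset * (#(cutEdges G P) * c) := by gcongr
    _ = #(cutEdges G P) * (Fintype.card V - 1) := by rw [← htotal]; ring

def componentPartition (A : Finset (Sym2 V)) : Finset (Finset V) :=
  univ.image fun C : (edgeGraph A).ConnectedComponent => C.supp.toFinset

theorem card_componentPartition (A : Finset (Sym2 V)) :
    #(componentPartition A) = numComponents A := by
  rw [componentPartition, card_image_of_injective _ fun C D h => ?_, card_univ, numComponents,
    Nat.card_eq_fintype_card]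
  exact ConnectedComponent.supp_injective (Set.toFinset_inj.1 h)

theorem isFeasiblePartition_componentPartition {G : SimpleGraph V} {A : Finset (Sym2 V)}
    (hA : A ⊆ G.edgeFinset) (h2 : 2 ≤ numComponents A) :
    IsFeasiblePartition G (componentPartition A) := by
  refine ⟨card_componentPartition A ▸ h2, ?_, fun v => ?_, ?_⟩
  · simp only [componentPartition, mem_image, mem_univ, true_and, forall_exists_index]
    rintro _ C rfl
    exact Set.toFinset_nonempty.2 C.nonempty_supp
  · refine ⟨((edgeGraph A).connectedComponentMk v).supp.toFinset,
      ⟨mem_image_of_mem _ (mem_univ _), by simp⟩, ?_⟩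
    rintro _ ⟨hq, hvq⟩
    obtain ⟨C, -, rfl⟩ := mem_image.1 hq
    rw [Set.mem_toFinset, ConnectedComponent.mem_supp_iff] at hvq
    rw [hvq]
  · intro p hp
    obtain ⟨C, -, rfl⟩ := mem_image.1 hp
    rw [Set.coe_toFinset]
    exact C.maximal_connected_induce_supp.prop.mono fun x y h => edgeGraph_le hA h

theorem cutEdges_componentPartition_subset {G : SimpleGraph V} {A : Finset (Sym2 V)} :
    cutEdges G (componentPartition A) ⊆ G.edgeFinset \ A := by
  intro e he
  rw [cutEdges, mem_filter] at he
  refine mem_sdiff.2 ⟨he.1, fun heA => he.2 ?_⟩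
  induction e using Sym2.ind with | _ x y =>
  refine ⟨((edgeGraph A).connectedComponentMk x).supp.toFinset,
    mem_image_of_mem _ (mem_univ _), fun z hz => ?_⟩
  rw [Set.mem_toFinset, ConnectedComponent.mem_supp_iff, ConnectedComponent.eq]
  rcases Sym2.mem_iff.1 hz with rfl | rfl
  · rfl
  · exact (reachable_edgeGraph_of_mem heA).symm

/-- The partition bound applied to the components of `A`. -/
theorem mul_card_le_of_partition_bound {G : SimpleGraph V}
    (hbound : ∀ P, IsFeasiblePartition G P →
      (#G.edgeFinset : ℝ) * (#P - 1) ≤ #(cutEdges G P) * (Fintype.card V - 1))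
    {A : Finset (Sym2 V)} (hA : A ⊆ G.edgeFinset) :
    ((Fintype.card V : ℝ) - 1) * #A ≤ #G.edgeFinset * (Fintype.card V - numComponents A) := by
  have hAE : (#A : ℝ) ≤ #G.edgeFinset := by exact_mod_cast card_le_card hA
  have hcV : (numComponents A : ℝ) ≤ Fintype.card V := by
    exact_mod_cast Nat.card_eq_fintype_card (α := V) ▸ numComponents_le_card A
  rcases lt_or_ge (numComponents A) 2 with hc | hc
  · have hc1 : (numComponents A : ℝ) ≤ 1 := by exact_mod_cast Nat.le_of_lt_succ hc
    -- the difference of the two sides is `(|V| - c)(|E| - |A|) + (1 - c)|A|`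
    nlinarith [mul_nonneg (sub_nonneg.2 hcV) (sub_nonneg.2 hAE),
      mul_nonneg (sub_nonneg.2 hc1) (Nat.cast_nonneg (α := ℝ) #A)]
  · have hcut : (#(cutEdges G (componentPartition A)) : ℝ) ≤ #G.edgeFinset - #A := by
      have := card_le_card (cutEdges_componentPartition_subset (G := G) (A := A))
      rw [card_sdiff_of_subset hA] at this
      rw [← Nat.cast_sub (card_le_card hA)]
      exact_mod_cast this
    have hpart := hbound _ (isFeasiblePartition_componentPartition hA hc)
    rw [card_componentPartition] at hpart
    have hc2 : (2 : ℝ) ≤ numComponents A := by exact_mod_cast hc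
    nlinarith [mul_le_mul_of_nonneg_right hcut (by linarith : (0 : ℝ) ≤ Fintype.card V - 1)]

theorem IsSpanningForest.mem_spanningTrees {G : SimpleGraph V} (hG : G.Connected)
    {F : Finset (Sym2 V)} (hF : IsSpanningForest F G.edgeFinset) : F ∈ spanningTrees G := by
  obtain ⟨hsub, hreach, hcard⟩ := hF
  have hconn : (edgeGraph F).Connected := by
    rwa [← numComponents_eq_one_iff, numComponents_congr hreach, numComponents_eq_one_iff,
      edgeGraph_edgeFinset]
  rw [numComponents_eq_one_iff.2 hconn, Nat.card_eq_fintype_card] at hcard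
  exact _root_.mem_spanningTrees.2 ⟨hsub, hconn, by omega⟩

theorem exists_mem_spanningTrees_weight_le {G : SimpleGraph V} (hG : G.Connected)
    (hrank : ∀ A ⊆ G.edgeFinset,
      ((Fintype.card V : ℝ) - 1) * #A ≤ #G.edgeFinset * (Fintype.card V - numComponents A))
    (w : Sym2 V → ℝ) :
    ∃ γ ∈ spanningTrees G,
      (#G.edgeFinset : ℝ) * ∑ e ∈ γ, w e ≤ (Fintype.card V - 1) * ∑ e ∈ G.edgeFinset, w e := by
  obtain ⟨M, hM⟩ := (G.edgeFinset.image w).exists_le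
  obtain ⟨F, hF, hW⟩ := exists_isSpanningForest_weight_le w _ _ G.edgeFinset
    (by simpa only [Nat.card_eq_fintype_card] using hrank) M
    fun e he => hM _ (mem_image_of_mem w he)
  refine ⟨F, hF.mem_spanningTrees hG, ?_⟩
  rw [numComponents_eq_one_iff.2 (by rwa [edgeGraph_edgeFinset]), Nat.card_eq_fintype_card] at hW
  calc _ ≤ _ := hW
    _ = _ := by push_cast; ring

theorem mem_convexHull_of_forall_exists_le {ι : Type*} [Fintype ι] [DecidableEq ι]
    (S : Finset (ι → ℝ)) (x : ι → ℝ)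
    (h : ∀ w : ι → ℝ, ∃ y ∈ S, ∑ i, w i * y i ≤ ∑ i, w i * x i) :
    x ∈ convexHull ℝ (S : Set (ι → ℝ)) := by
  by_contra hx
  obtain ⟨φ, u, hφx, hφS⟩ := geometric_hahn_banach_point_closed (convex_convexHull ℝ _)
    (S.finite_toSet.isClosed_convexHull ℝ) hx
  set w : ι → ℝ := fun i => φ fun j => if i = j then 1 else 0
  have hφ : ∀ z, φ z = ∑ i, w i * z i := fun z => by
    simpa [w, mul_comm] using LinearMap.pi_apply_eq_sum_univ (φ : (ι → ℝ) →ₗ[ℝ] ℝ) z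
  obtain ⟨y, hyS, hy⟩ := h w
  have := hφS y (subset_convexHull ℝ _ hyS)
  rw [hφ] at this hφx
  linarith

theorem exists_isPmf_eta_eq (Γ : Finset (Finset (Sym2 V))) (x : Sym2 V → ℝ)
    (h : ∀ w : Sym2 V → ℝ, ∃ γ ∈ Γ, ∑ e ∈ γ, w e ≤ ∑ e, w e * x e) :
    ∃ μ, IsPmf Γ μ ∧ ∀ e, eta Γ μ e = x e := by
  set ind : Finset (Sym2 V) → Sym2 V → ℝ := fun γ e => if e ∈ γ then 1 else 0
  have hind : Function.Injective ind := fun γ γ' hγ => by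
    ext e
    have := congrFun hγ e
    simp only [ind] at this
    split_ifs at this <;> simp_all
  have hx := mem_convexHull_of_forall_exists_le (Γ.image ind) x fun w => by
    obtain ⟨γ, hγ, hle⟩ := h w
    exact ⟨ind γ, mem_image_of_mem _ hγ, by simpa [ind] using hle⟩
  obtain ⟨ω, hω0, hω1, hωx⟩ := Finset.mem_convexHull'.1 hx
  rw [sum_image hind.injOn] at hω1 hωx
  refine ⟨fun γ => if γ ∈ Γ then ω (ind γ) else 0, ⟨fun γ => ?_, fun γ hγ => if_neg hγ, ?_⟩,
    fun e => ?_⟩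
  · dsimp only
    split_ifs with hγ
    exacts [hω0 _ (mem_image_of_mem _ hγ), le_rfl]
  · rw [← hω1]
    exact sum_congr rfl fun γ hγ => if_pos hγ
  · rw [← hωx, eta, sum_filter, Finset.sum_apply]
    refine sum_congr rfl fun γ hγ => ?_
    simp [ind, hγ]

theorem isHomogeneous_of_partition_bound {G : SimpleGraph V} (hG : G.Connected)
    (hbound : ∀ P, IsFeasiblePartition G P →
      (#G.edgeFinset : ℝ) * (#P - 1) ≤ #(cutEdges G P) * (Fintype.card V - 1)) :
    IsHomogeneous G := by
  set t : ℝ := ((Fintype.card V : ℝ) - 1) / #G.edgeFinset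
  have hsep : ∀ w : Sym2 V → ℝ, ∃ γ ∈ spanningTrees G,
      ∑ e ∈ γ, w e ≤ ∑ e, w e * if e ∈ G.edgeFinset then t else 0 := by
    intro w
    obtain ⟨γ, hγ, hle⟩ := exists_mem_spanningTrees_weight_le hG
      (fun A hA => mul_card_le_of_partition_bound hbound hA) w
    refine ⟨γ, hγ, ?_⟩
    simp only [mul_ite, mul_zero, sum_ite_mem, univ_inter]
    rw [← sum_mul, mul_comm, div_mul_eq_mul_div]
    rcases (#G.edgeFinset).eq_zero_or_pos with hm | hm
    · have hγE := (mem_spanningTrees.1 hγ).1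
      rw [card_eq_zero.1 hm, subset_empty] at hγE
      simp [hγE, hm]
    · rw [le_div_iff₀ (by exact_mod_cast hm)]
      linarith
  obtain ⟨μ, hμ, hη⟩ := exists_isPmf_eta_eq _ _ hsep
  exact ⟨μ, hμ, t, fun e he => by rw [hη, if_pos he]⟩

theorem homogeneous_iff_feasible_partition_bound_general
    {V : Type*} [Fintype V] [DecidableEq V]
    (G : SimpleGraph V) (hG : G.Connected) :
    IsHomogeneous G ↔
      ∀ P : Finset (Finset V), IsFeasiblePartition G P →
        (G.edgeFinset.card : ℝ) / ((Fintype.card V : ℝ) - 1) ≤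
          ((cutEdges G P).card : ℝ) / ((P.card : ℝ) - 1) := by
  have hdiv : ∀ P, IsFeasiblePartition G P →
      ((#G.edgeFinset : ℝ) / (Fintype.card V - 1) ≤ #(cutEdges G P) / (#P - 1) ↔
        (#G.edgeFinset : ℝ) * (#P - 1) ≤ #(cutEdges G P) * (Fintype.card V - 1)) := by
    intro P hP
    have hk : (2 : ℝ) ≤ #P := by exact_mod_cast hP.1
    have hn : (#P : ℝ) ≤ Fintype.card V := by exact_mod_cast hP.card_le
    exact div_le_div_iff₀ (by linarith) (by linarith)
  exact ⟨fun h P hP => (hdiv P hP).2 (h.mul_sub_one_le hP),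
    fun h => isHomogeneous_of_partition_bound hG fun P hP => (hdiv P hP).1 (h P hP)⟩

/-- `G` is homogeneous iff every feasible partition `P` satisfies
`|E_P|/(k_P - 1) ≥ |E|/(|V| - 1)`. -/
theorem homogeneous_iff_feasible_partition_bound
    {V : Type*} [Fintype V] [DecidableEq V]
    (G : SimpleGraph V) (hG : G.Connected) (hE : G.edgeFinset.Nonempty) :
    IsHomogeneous G ↔
      ∀ P : Finset (Finset V), IsFeasiblePartition G P →
        (G.edgeFinset.card : ℝ) / ((Fintype.card V : ℝ) - 1) ≤
          ((cutEdges G P).card : ℝ) / ((P.card : ℝ) - 1) :=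
  homogeneous_iff_feasible_partition_bound_general G hG
end
end

section
/- Let G = (V,E) be a finite connected simple graph with at least one edge. Then G admits a homogeneous core: there exists a vertex set V_H ⊆ V such that the induced subgraph H = G[V_H] is connected and has at least one edge, every fair spanning tree γ of G restricts to a spanning tree of H (i.e., γ ∩ E_H ∈ Γ_H for every fair γ ∈ Γ_G), and H is homogeneous (there exists a pmf on Γ_H whose edge usage probability is constant on E_H). -/
noncomputable section
open scoped Classical
open Finset

variable {V : Type*} [Fintype V] [DecidableEq V]

set_option linter.unusedSectionVars false
set_option maxHeartbeats 1000000
open SimpleGraph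

section GraphLemmas
variable {α : Type*}

/-- Routing around a removed edge: if the endpoints of `e=s(x,y)` are reachable
in `H`, then reachability in `H ⊔ {e}` gives reachability in `H`. -/
lemma reach_sup (H : SimpleGraph α) (x y : α) (hxy : H.Reachable x y) {u v : α}
    (w : (H ⊔ SimpleGraph.fromEdgeSet {s(x,y)}).Walk u v) : H.Reachable u v := by
  induction w with
  | nil => exact Reachable.refl _
  | @cons a b c h q ih =>
      refine Reachable.trans ?_ ih
      rcases (SimpleGraph.sup_adj _ _ _ _).mp h with h' | h'
      · exact h'.reachable
      · rw [SimpleGraph.fromEdgeSet_adj] at h'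
        rcases Sym2.eq_iff.mp (Set.mem_singleton_iff.mp h'.1) with ⟨rfl, rfl⟩ | ⟨rfl, rfl⟩
        · exact hxy
        · exact hxy.symm

/-- Splitting into (at most) two sides after removing an edge. -/
lemma reach_split (H : SimpleGraph α) (x y : α) {u v : α}
    (w : (H ⊔ SimpleGraph.fromEdgeSet {s(x,y)}).Walk u v) :
    H.Reachable u v ∨ (H.Reachable u x ∧ H.Reachable y v) ∨
      (H.Reachable u y ∧ H.Reachable x v) := by
  induction w with
  | nil => exact Or.inl (Reachable.refl _)
  | @cons a b c h q ih =>
      rcases (SimpleGraph.sup_adj _ _ _ _).mp h with h' | h'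
      · rcases ih with h1 | ⟨h1, h2⟩ | ⟨h1, h2⟩
        · exact Or.inl (h'.reachable.trans h1)
        · exact Or.inr (Or.inl ⟨h'.reachable.trans h1, h2⟩)
        · exact Or.inr (Or.inr ⟨h'.reachable.trans h1, h2⟩)
      · rw [SimpleGraph.fromEdgeSet_adj] at h'
        rcases Sym2.eq_iff.mp (Set.mem_singleton_iff.mp h'.1) with ⟨rfl, rfl⟩ | ⟨rfl, rfl⟩
        · rcases ih with h1 | ⟨h1, h2⟩ | ⟨h1, h2⟩
          · exact Or.inr (Or.inl ⟨Reachable.refl _, h1⟩)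
          · exact Or.inl (h1.symm.trans h2)
          · exact Or.inl h2
        · rcases ih with h1 | ⟨h1, h2⟩ | ⟨h1, h2⟩
          · exact Or.inr (Or.inr ⟨Reachable.refl _, h1⟩)
          · exact Or.inl h2
          · exact Or.inl (h1.symm.trans h2)

end GraphLemmas

lemma fromEdgeSet_erase_eq (γ : Finset (Sym2 V)) (e : Sym2 V) :
    SimpleGraph.fromEdgeSet (↑(γ.erase e) : Set (Sym2 V)) =
      SimpleGraph.fromEdgeSet (↑γ : Set (Sym2 V)) \ SimpleGraph.fromEdgeSet {e} := by
  ext u v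
  simp only [SimpleGraph.fromEdgeSet_adj, SimpleGraph.sdiff_adj, Finset.coe_erase,
    Set.mem_diff, Set.mem_singleton_iff, Finset.mem_coe]
  tauto

lemma le_sup_erase (γ : Finset (Sym2 V)) (e : Sym2 V) (H : SimpleGraph V)
    (hH : SimpleGraph.fromEdgeSet (↑(γ.erase e) : Set (Sym2 V)) ≤ H) :
    SimpleGraph.fromEdgeSet (↑γ : Set (Sym2 V)) ≤ H ⊔ SimpleGraph.fromEdgeSet {e} := by
  intro u v huv
  rw [SimpleGraph.fromEdgeSet_adj] at huv
  rw [SimpleGraph.sup_adj]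
  by_cases he : s(u,v) = e
  · exact Or.inr ((SimpleGraph.fromEdgeSet_adj _).mpr ⟨by simp [he], huv.2⟩)
  · exact Or.inl (hH ((SimpleGraph.fromEdgeSet_adj _).mpr
      ⟨Finset.mem_coe.mpr (Finset.mem_erase.mpr ⟨he, huv.1⟩), huv.2⟩))

section TreeCount

lemma exists_spanning_tree_finset :
    ∀ (n : ℕ) (S : Finset (Sym2 V)), S.card = n → (∀ e ∈ S, ¬ e.IsDiag) →
    (SimpleGraph.fromEdgeSet (↑S : Set (Sym2 V))).Connected →
    ∃ γ, γ ⊆ S ∧ (SimpleGraph.fromEdgeSet (↑γ : Set (Sym2 V))).Connected ∧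
      γ.card + 1 = Fintype.card V := by
  intro n
  induction n using Nat.strong_induction_on with
  | _ n ih =>
    intro S hcard hd hS
    by_cases hmin : ∃ e ∈ S, (SimpleGraph.fromEdgeSet (↑(S.erase e) : Set (Sym2 V))).Connected
    · obtain ⟨e, heS, hconn⟩ := hmin
      obtain ⟨γ, h1, h2, h3⟩ := ih (S.erase e).card (hcard ▸ Finset.card_erase_lt_of_mem heS)
        (S.erase e) rfl (fun f hf => hd f (Finset.mem_of_mem_erase hf)) hconn
      exact ⟨γ, h1.trans (Finset.erase_subset _ _), h2, h3⟩
    · push_neg at hmin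
      have hac : (SimpleGraph.fromEdgeSet (↑S : Set (Sym2 V))).IsAcyclic := by
        rw [SimpleGraph.isAcyclic_iff_forall_adj_isBridge]
        intro x y hxy
        rw [SimpleGraph.isBridge_iff]
        intro hreach
        have hxyS : s(x,y) ∈ S := ((SimpleGraph.fromEdgeSet_adj _).mp hxy).1
        apply hmin s(x,y) hxyS
        rw [fromEdgeSet_erase_eq]
        have hle : SimpleGraph.fromEdgeSet (↑S : Set (Sym2 V)) ≤
            (SimpleGraph.fromEdgeSet (↑S : Set (Sym2 V)) \ SimpleGraph.fromEdgeSet {s(x,y)}) ⊔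
              SimpleGraph.fromEdgeSet {s(x,y)} :=
          le_sup_erase S s(x,y) _ (le_of_eq (fromEdgeSet_erase_eq S s(x,y)))
        haveI := hS.nonempty
        refine ⟨fun u v => ?_⟩
        obtain ⟨w⟩ := hS.preconnected u v
        exact reach_sup _ x y hreach (w.mapLe hle)
      haveI : Fintype ((SimpleGraph.fromEdgeSet (↑S : Set (Sym2 V))).edgeSet) :=
        Fintype.ofFinite _
      have htree : (SimpleGraph.fromEdgeSet (↑S : Set (Sym2 V))).IsTree := ⟨hS, hac⟩
      have hcard' := htree.card_edgeFinset
      have hES : (SimpleGraph.fromEdgeSet (↑S : Set (Sym2 V))).edgeFinset = S := by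
        ext f
        rw [SimpleGraph.mem_edgeFinset, SimpleGraph.edgeSet_fromEdgeSet]
        constructor
        · rintro ⟨h1, _⟩; exact h1
        · intro h; exact ⟨h, hd f h⟩
      exact ⟨S, subset_rfl, hS, by rw [← hES]; exact hcard'⟩

lemma card_V_le (S : Finset (Sym2 V)) (hd : ∀ e ∈ S, ¬ e.IsDiag)
    (hS : (SimpleGraph.fromEdgeSet (↑S : Set (Sym2 V))).Connected) :
    Fintype.card V ≤ S.card + 1 := by
  obtain ⟨γ, h1, _, h3⟩ := exists_spanning_tree_finset S.card S rfl hd hS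
  have := Finset.card_le_card h1
  omega

end TreeCount

section TreeLemmas
variable {G : SimpleGraph V} {γ : Finset (Sym2 V)}

lemma mem_spanningTrees_iff {γ : Finset (Sym2 V)} :
    γ ∈ spanningTrees G ↔ (↑γ : Set (Sym2 V)) ⊆ G.edgeSet ∧
      (SimpleGraph.fromEdgeSet (↑γ : Set (Sym2 V))).Connected ∧
      γ.card = Fintype.card V - 1 := by
  simp [spanningTrees]

lemma tree_not_diag (hγ : γ ∈ spanningTrees G) {e : Sym2 V} (he : e ∈ γ) : ¬ e.IsDiag :=
  SimpleGraph.not_isDiag_of_mem_edgeSet G ((mem_spanningTrees_iff.mp hγ).1 he)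

lemma mem_edgeSet_fromEdgeSet_finset {S : Finset (Sym2 V)} {f : Sym2 V}
    (h1 : f ∈ S) (h2 : ¬ f.IsDiag) :
    f ∈ (SimpleGraph.fromEdgeSet (↑S : Set (Sym2 V))).edgeSet := by
  rw [SimpleGraph.edgeSet_fromEdgeSet]; exact ⟨h1, h2⟩

lemma tree_acyclic (hγ : γ ∈ spanningTrees G) :
    (SimpleGraph.fromEdgeSet (↑γ : Set (Sym2 V))).IsAcyclic := by
  obtain ⟨hsub, hconn, hcard⟩ := mem_spanningTrees_iff.mp hγ
  rw [SimpleGraph.isAcyclic_iff_forall_adj_isBridge]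
  intro x y hxy
  rw [SimpleGraph.isBridge_iff]
  intro hreach
  have hxyγ : s(x,y) ∈ γ := ((SimpleGraph.fromEdgeSet_adj _).mp hxy).1
  have hconn' : (SimpleGraph.fromEdgeSet (↑(γ.erase s(x,y)) : Set (Sym2 V))).Connected := by
    rw [fromEdgeSet_erase_eq]
    haveI := hconn.nonempty
    refine ⟨fun u v => ?_⟩
    obtain ⟨w⟩ := hconn.preconnected u v
    exact reach_sup _ x y hreach
      (w.mapLe (le_sup_erase γ s(x,y) _ (le_of_eq (fromEdgeSet_erase_eq γ s(x,y)))))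
  have hle := card_V_le (γ.erase s(x,y))
    (fun f hf => tree_not_diag hγ (Finset.mem_of_mem_erase hf)) hconn'
  have h2 : 2 ≤ Fintype.card V := Fintype.one_lt_card_iff_nontrivial.mpr ⟨⟨x, y, hxy.ne⟩⟩
  have h3 := Finset.card_erase_of_mem hxyγ
  have h4 : 0 < γ.card := Finset.card_pos.mpr ⟨_, hxyγ⟩
  omega

lemma tree_bridge (hγ : γ ∈ spanningTrees G) {x y : V} (hxy : s(x,y) ∈ γ) (hne : x ≠ y) :
    ¬ (SimpleGraph.fromEdgeSet (↑(γ.erase s(x,y)) : Set (Sym2 V))).Reachable x y := by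
  have hadj : (SimpleGraph.fromEdgeSet (↑γ : Set (Sym2 V))).Adj x y :=
    (SimpleGraph.fromEdgeSet_adj _).mpr ⟨hxy, hne⟩
  have hbr := (SimpleGraph.isAcyclic_iff_forall_adj_isBridge.mp (tree_acyclic hγ)) hadj
  rw [SimpleGraph.isBridge_iff] at hbr
  rw [fromEdgeSet_erase_eq]
  exact hbr

lemma swap_mem (hγ : γ ∈ spanningTrees G) {x y a b : V} (he : s(x,y) ∈ γ)
    (hfE : s(a,b) ∈ G.edgeSet) (hfγ : s(a,b) ∉ γ)
    (hab : ¬ (SimpleGraph.fromEdgeSet (↑(γ.erase s(x,y)) : Set (Sym2 V))).Reachable a b) :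
    insert s(a,b) (γ.erase s(x,y)) ∈ spanningTrees G := by
  obtain ⟨hsub, hconn, hcard⟩ := mem_spanningTrees_iff.mp hγ
  have hadjG : G.Adj a b := (SimpleGraph.mem_edgeSet G).mp hfE
  have hne : a ≠ b := hadjG.ne
  set T' := SimpleGraph.fromEdgeSet (↑(γ.erase s(x,y)) : Set (Sym2 V)) with hT'
  set T'' := SimpleGraph.fromEdgeSet (↑(insert s(a,b) (γ.erase s(x,y))) : Set (Sym2 V)) with hT''
  have hT'le : T' ≤ T'' :=
    SimpleGraph.fromEdgeSet_mono (Finset.coe_subset.mpr (Finset.subset_insert _ _))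
  have hadjT'' : T''.Adj a b := (SimpleGraph.fromEdgeSet_adj _).mpr
    ⟨Finset.mem_coe.mpr (Finset.mem_insert_self _ _), hne⟩
  have hsplit : ∀ v : V, T'.Reachable x v ∨ T'.Reachable y v ∨ T'.Reachable x y := by
    intro v
    obtain ⟨w⟩ := hconn.preconnected x v
    have hle2 : SimpleGraph.fromEdgeSet (↑γ : Set (Sym2 V)) ≤
        T' ⊔ SimpleGraph.fromEdgeSet {s(x,y)} := le_sup_erase γ s(x,y) _ le_rfl
    rcases reach_split T' x y (w.mapLe hle2) with h | ⟨_, h2⟩ | ⟨h1, _⟩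
    · exact Or.inl h
    · exact Or.inr (Or.inl h2)
    · exact Or.inr (Or.inr h1)
  have hxyT'' : T''.Reachable x y := by
    rcases hsplit a with ha | ha | hxy'
    · rcases hsplit b with hb | hb | hxy'
      · exact absurd (ha.symm.trans hb) hab
      · exact ((ha.mono hT'le).trans hadjT''.reachable).trans (hb.mono hT'le).symm
      · exact hxy'.mono hT'le
    · rcases hsplit b with hb | hb | hxy'
      · exact ((hb.mono hT'le).trans hadjT''.reachable.symm).trans (ha.mono hT'le).symm
      · exact absurd (ha.symm.trans hb) hab
      · exact hxy'.mono hT'le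
    · exact hxy'.mono hT'le
  have hconn'' : T''.Connected := by
    haveI := hconn.nonempty
    refine ⟨fun u v => ?_⟩
    obtain ⟨w⟩ := hconn.preconnected u v
    exact reach_sup _ x y hxyT'' (w.mapLe (le_sup_erase γ s(x,y) T'' hT'le))
  refine mem_spanningTrees_iff.mpr ⟨?_, hconn'', ?_⟩
  · intro f hf
    rcases Finset.mem_insert.mp (Finset.mem_coe.mp hf) with rfl | hf'
    · exact hfE
    · exact hsub (Finset.mem_coe.mpr (Finset.mem_of_mem_erase hf'))
  · have h1 : s(a,b) ∉ γ.erase s(x,y) := fun h => hfγ (Finset.mem_of_mem_erase h)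
    rw [Finset.card_insert_of_notMem h1, Finset.card_erase_of_mem he]
    have h4 : 0 < γ.card := Finset.card_pos.mpr ⟨_, he⟩
    omega

lemma path_edge_sep (hγ : γ ∈ spanningTrees G) :
    ∀ {a b : V} (p : (SimpleGraph.fromEdgeSet (↑γ : Set (Sym2 V))).Walk a b), p.IsPath →
      ∀ e ∈ p.edges, ¬ (SimpleGraph.fromEdgeSet (↑(γ.erase e) : Set (Sym2 V))).Reachable a b := by
  intro a b p
  induction p with
  | nil => intro _ e he; simp at he
  | @cons a c b h q ih =>
      intro hp e he hreach
      have hqpath : q.IsPath := hp.of_cons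
      have hnodup := hp.isTrail.edges_nodup
      rw [SimpleGraph.Walk.edges_cons] at he hnodup
      have hacγ : s(a,c) ∈ γ := ((SimpleGraph.fromEdgeSet_adj _).mp h).1
      rcases List.mem_cons.mp he with rfl | heq
      · have hqe : s(a,c) ∉ q.edges := (List.nodup_cons.mp hnodup).1
        have hq' : (SimpleGraph.fromEdgeSet (↑(γ.erase s(a,c)) : Set (Sym2 V))).Reachable c b := by
          refine ⟨q.transfer _ (fun f hf => ?_)⟩
          have hfγ : f ∈ γ := by
            have := q.edges_subset_edgeSet hf
            rw [SimpleGraph.edgeSet_fromEdgeSet] at this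
            exact this.1
          exact mem_edgeSet_fromEdgeSet_finset
            (Finset.mem_erase.mpr ⟨fun hfe => hqe (hfe ▸ hf), hfγ⟩)
            (tree_not_diag hγ hfγ)
        exact tree_bridge hγ hacγ h.ne (hreach.trans hq'.symm)
      · have hne : s(a,c) ≠ e := fun h' => (List.nodup_cons.mp hnodup).1 (h' ▸ heq)
        have hadj' : (SimpleGraph.fromEdgeSet (↑(γ.erase e) : Set (Sym2 V))).Adj a c :=
          (SimpleGraph.fromEdgeSet_adj _).mpr ⟨Finset.mem_coe.mpr
            (Finset.mem_erase.mpr ⟨hne, hacγ⟩), h.ne⟩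
        exact ih hqpath e heq (hadj'.reachable.symm.trans hreach)

end TreeLemmas

section Analysis
variable (Γ : Finset (Finset (Sym2 V)))

lemma sym2_ex (e : Sym2 V) : ∃ x y, e = s(x,y) := by
  induction e using Sym2.ind with | _ x y => exact ⟨x, y, rfl⟩

lemma eta_nonneg {μ : Finset (Sym2 V) → ℝ} (hμ : ∀ δ, 0 ≤ μ δ) (e : Sym2 V) :
    0 ≤ eta Γ μ e :=
  Finset.sum_nonneg fun δ _ => hμ δ

lemma EO_eq_sum_sq (μ : Finset (Sym2 V) → ℝ) :
    EO Γ μ = ∑ e : Sym2 V, (eta Γ μ e)^2 := by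
  symm
  calc ∑ e : Sym2 V, (eta Γ μ e)^2
      = ∑ e : Sym2 V, ∑ γ ∈ Γ, ∑ γ' ∈ Γ,
          (if e ∈ γ then μ γ else 0) * (if e ∈ γ' then μ γ' else 0) := by
        refine Finset.sum_congr rfl fun e _ => ?_
        rw [sq, eta, Finset.sum_filter, Finset.sum_mul_sum]
    _ = ∑ γ ∈ Γ, ∑ e : Sym2 V, ∑ γ' ∈ Γ,
          (if e ∈ γ then μ γ else 0) * (if e ∈ γ' then μ γ' else 0) := Finset.sum_comm
    _ = ∑ γ ∈ Γ, ∑ γ' ∈ Γ, ∑ e : Sym2 V,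
          (if e ∈ γ then μ γ else 0) * (if e ∈ γ' then μ γ' else 0) :=
        Finset.sum_congr rfl fun γ _ => Finset.sum_comm
    _ = EO Γ μ := by
        refine Finset.sum_congr rfl fun γ _ => Finset.sum_congr rfl fun γ' _ => ?_
        have hpt : ∀ e : Sym2 V, (if e ∈ γ then μ γ else 0) * (if e ∈ γ' then μ γ' else 0)
            = if e ∈ γ ∩ γ' then μ γ * μ γ' else 0 := by
          intro e
          by_cases h1 : e ∈ γ <;> by_cases h2 : e ∈ γ' <;> simp [h1, h2, Finset.mem_inter]
        simp_rw [hpt]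
        rw [Finset.sum_ite_mem, Finset.univ_inter, Finset.sum_const, nsmul_eq_mul, mul_assoc]

lemma EO_nonneg (μ : Finset (Sym2 V) → ℝ) : 0 ≤ EO Γ μ := by
  rw [EO_eq_sum_sq]
  exact Finset.sum_nonneg fun e _ => sq_nonneg _

lemma exists_optimal (hne : Γ.Nonempty) :
    ∃ μ, IsPmf Γ μ ∧ ∀ ν, IsPmf Γ ν → EO Γ μ ≤ EO Γ ν := by
  obtain ⟨γ₀, hγ₀⟩ := hne
  have hμ0 : IsPmf Γ (fun δ => if δ = γ₀ then (1:ℝ) else 0) := by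
    refine ⟨fun δ => by positivity, fun δ hδ => ?_, ?_⟩
    · simp only [ite_eq_right_iff]
      intro h; exact absurd (h ▸ hγ₀) hδ
    · rw [Finset.sum_ite_eq' Γ γ₀ (fun _ => (1:ℝ))]
      simp [hγ₀]
  have hclosed : IsClosed {μ : Finset (Sym2 V) → ℝ | IsPmf Γ μ} := by
    have heq : {μ : Finset (Sym2 V) → ℝ | IsPmf Γ μ} =
        (⋂ (γ : Finset (Sym2 V)), {μ : Finset (Sym2 V) → ℝ | 0 ≤ μ γ}) ∩
        ((⋂ (γ : Finset (Sym2 V)) (_ : γ ∉ Γ), {μ : Finset (Sym2 V) → ℝ | μ γ = 0}) ∩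
          {μ : Finset (Sym2 V) → ℝ | ∑ γ ∈ Γ, μ γ = 1}) := by
      ext μ
      simp [IsPmf, Set.mem_iInter, Set.mem_setOf_eq]
    rw [heq]
    refine IsClosed.inter (isClosed_iInter fun γ => ?_)
      (IsClosed.inter (isClosed_iInter fun γ => isClosed_iInter fun _ => ?_) ?_)
    · exact isClosed_le continuous_const (continuous_apply γ)
    · exact isClosed_eq (continuous_apply γ) continuous_const
    · exact isClosed_eq (continuous_finset_sum _ fun γ _ => continuous_apply γ) continuous_const
  have hsubset : {μ : Finset (Sym2 V) → ℝ | IsPmf Γ μ} ⊆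
      Set.pi Set.univ (fun _ : Finset (Sym2 V) => Set.Icc (0:ℝ) 1) := by
    rintro μ ⟨h1, h2, h3⟩ δ _
    refine ⟨h1 δ, ?_⟩
    by_cases hδ : δ ∈ Γ
    · calc μ δ ≤ ∑ γ ∈ Γ, μ γ := Finset.single_le_sum (fun γ _ => h1 γ) hδ
        _ = 1 := h3
    · rw [h2 δ hδ]; norm_num
  have hK : IsCompact {μ : Finset (Sym2 V) → ℝ | IsPmf Γ μ} :=
    IsCompact.of_isClosed_subset (isCompact_univ_pi (fun _ => isCompact_Icc)) hclosed hsubset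
  have hcont : Continuous (fun μ : Finset (Sym2 V) → ℝ => EO Γ μ) := by
    unfold EO
    exact continuous_finset_sum _ fun γ _ => continuous_finset_sum _ fun γ' _ =>
      (continuous_const.mul (continuous_apply γ)).mul (continuous_apply γ')
  obtain ⟨μ, hμK, hmin⟩ := hK.exists_isMinOn ⟨_, hμ0⟩ hcont.continuousOn
  exact ⟨μ, hμK, fun ν hν => hmin hν⟩

lemma opt_EO_eq_MEO {μ : Finset (Sym2 V) → ℝ} (hpmf : IsPmf Γ μ)
    (hopt : ∀ ν, IsPmf Γ ν → EO Γ μ ≤ EO Γ ν) : EO Γ μ = MEO Γ := by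
  unfold MEO
  apply le_antisymm
  · exact le_csInf ⟨EO Γ μ, μ, hpmf, rfl⟩ (by rintro x ⟨ν, hν, rfl⟩; exact hopt ν hν)
  · exact csInf_le ⟨0, by rintro x ⟨ν, hν, rfl⟩; exact EO_nonneg Γ ν⟩ ⟨μ, hpmf, rfl⟩

lemma fair_exists_opt {G : SimpleGraph V} {γ : Finset (Sym2 V)} (h : IsFair G γ) :
    ∃ μ, IsPmf (spanningTrees G) μ ∧
      (∀ ν, IsPmf (spanningTrees G) ν → EO (spanningTrees G) μ ≤ EO (spanningTrees G) ν) ∧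
      0 < μ γ := by
  obtain ⟨μ, hpmf, hEO, hpos⟩ := h
  refine ⟨μ, hpmf, fun ν hν => ?_, hpos⟩
  rw [hEO]
  exact csInf_le ⟨0, by rintro x ⟨ν', hν', rfl⟩; exact EO_nonneg _ ν'⟩ ⟨ν, hν, rfl⟩

end Analysis

section Variational
variable (Γ : Finset (Finset (Sym2 V)))

lemma eta_shift {μ : Finset (Sym2 V) → ℝ} {γ γ' : Finset (Sym2 V)} (hγ : γ ∈ Γ) (hγ' : γ' ∈ Γ)
    (t : ℝ) (e : Sym2 V) :
    eta Γ (fun δ => μ δ + t * ((if δ = γ' then 1 else 0) - (if δ = γ then 1 else 0))) e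
      = eta Γ μ e + t * ((if e ∈ γ' then 1 else 0) - (if e ∈ γ then 1 else 0)) := by
  unfold eta
  rw [Finset.sum_add_distrib, ← Finset.mul_sum, Finset.sum_sub_distrib,
    Finset.sum_ite_eq' (Γ.filter (fun δ => e ∈ δ)) γ' (fun _ => (1:ℝ)),
    Finset.sum_ite_eq' (Γ.filter (fun δ => e ∈ δ)) γ (fun _ => (1:ℝ))]
  by_cases h : e ∈ γ' <;> by_cases h2 : e ∈ γ <;>
    simp [Finset.mem_filter, hγ, hγ', h, h2]

lemma opt_support_sum_le {μ : Finset (Sym2 V) → ℝ} (hpmf : IsPmf Γ μ)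
    (hopt : ∀ ν, IsPmf Γ ν → EO Γ μ ≤ EO Γ ν)
    {γ γ' : Finset (Sym2 V)} (hγ : γ ∈ Γ) (hγ' : γ' ∈ Γ) (hpos : 0 < μ γ) :
    ∑ e ∈ γ, eta Γ μ e ≤ ∑ e ∈ γ', eta Γ μ e := by
  by_cases hgg : γ' = γ
  · subst hgg; exact le_refl _
  by_contra hlt
  push_neg at hlt
  obtain ⟨h1, h2, h3⟩ := hpmf
  set S := ∑ e ∈ γ, eta Γ μ e with hS
  set S' := ∑ e ∈ γ', eta Γ μ e with hS'
  set d : Sym2 V → ℝ := fun e => (if e ∈ γ' then 1 else 0) - (if e ∈ γ then 1 else 0) with hd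
  set D := ∑ e : Sym2 V, (d e)^2 with hD
  have hD0 : 0 ≤ D := Finset.sum_nonneg fun e _ => sq_nonneg _
  set t := min (μ γ) ((S - S')/(D+1)) with ht
  have ht0 : 0 < t := lt_min hpos (div_pos (by linarith) (by linarith))
  have htμ : t ≤ μ γ := min_le_left _ _
  have htD : t * (D + 1) ≤ S - S' := by
    rw [← le_div_iff₀ (by linarith : (0:ℝ) < D + 1)]
    exact min_le_right _ _
  set ν : Finset (Sym2 V) → ℝ :=
    fun δ => μ δ + t * ((if δ = γ' then 1 else 0) - (if δ = γ then 1 else 0)) with hν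
  have hνpmf : IsPmf Γ ν := by
    refine ⟨fun δ => ?_, fun δ hδ => ?_, ?_⟩
    · by_cases hδ1 : δ = γ'
      · have hδγ : ¬ δ = γ := fun h => hgg (hδ1.symm.trans h)
        have hv : ν δ = μ δ + t := by simp [hν, hδ1, hδγ, hgg]
        rw [hv]
        have := h1 δ; linarith
      · by_cases hδ2 : δ = γ
        · have hγγ' : ¬ γ = γ' := fun h => hgg h.symm
          have hv : ν δ = μ δ - t := by simp [hν, hδ1, hδ2, hγγ']; ring
          rw [hv, hδ2]
          linarith
        · have hv : ν δ = μ δ := by simp [hν, hδ1, hδ2]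
          rw [hv]
          exact h1 δ
    · have hδ1 : δ ≠ γ' := fun h => hδ (h ▸ hγ')
      have hδ2 : δ ≠ γ := fun h => hδ (h ▸ hγ)
      simp only [hν, if_neg hδ1, if_neg hδ2, h2 δ hδ]
      ring
    · simp only [hν]
      rw [Finset.sum_add_distrib, h3, ← Finset.mul_sum, Finset.sum_sub_distrib]
      rw [Finset.sum_ite_eq' Γ γ' (fun _ => (1:ℝ)), Finset.sum_ite_eq' Γ γ (fun _ => (1:ℝ))]
      simp [hγ, hγ']
  have hEOν : EO Γ ν = EO Γ μ + t * (2 * (S' - S) + t * D) := by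
    rw [EO_eq_sum_sq, EO_eq_sum_sq]
    have hterm : ∀ e : Sym2 V, (eta Γ ν e)^2
        = (eta Γ μ e)^2 + (2 * t) * (eta Γ μ e * d e) + t^2 * (d e)^2 := by
      intro e
      rw [hν, eta_shift Γ hγ hγ' t e]
      ring
    simp_rw [hterm]
    rw [Finset.sum_add_distrib, Finset.sum_add_distrib, ← Finset.mul_sum, ← Finset.mul_sum]
    have hSd : ∑ e : Sym2 V, eta Γ μ e * d e = S' - S := by
      simp only [hd, mul_sub]
      rw [Finset.sum_sub_distrib]
      congr 1
      · simp_rw [mul_ite, mul_one, mul_zero]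
        rw [Finset.sum_ite_mem, Finset.univ_inter]
      · simp_rw [mul_ite, mul_one, mul_zero]
        rw [Finset.sum_ite_mem, Finset.univ_inter]
    rw [hSd, ← hD]
    ring
  have hcontra := hopt ν hνpmf
  rw [hEOν] at hcontra
  have hneg : 2 * (S' - S) + t * D < 0 := by
    have h6 : t * D ≤ S - S' - t := by nlinarith
    linarith
  nlinarith

lemma opt_eta_unique {μ1 μ2 : Finset (Sym2 V) → ℝ} (h1 : IsPmf Γ μ1) (h2 : IsPmf Γ μ2)
    (hopt1 : ∀ ν, IsPmf Γ ν → EO Γ μ1 ≤ EO Γ ν)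
    (hopt2 : ∀ ν, IsPmf Γ ν → EO Γ μ2 ≤ EO Γ ν) :
    ∀ e, eta Γ μ1 e = eta Γ μ2 e := by
  set μ3 : Finset (Sym2 V) → ℝ := fun δ => (μ1 δ + μ2 δ)/2 with hμ3
  have h3 : IsPmf Γ μ3 := by
    obtain ⟨a1, a2, a3⟩ := h1
    obtain ⟨b1, b2, b3⟩ := h2
    refine ⟨fun δ => by have := a1 δ; have := b1 δ; simp only [hμ3]; linarith,
      fun δ hδ => by simp only [hμ3, a2 δ hδ, b2 δ hδ]; ring, ?_⟩
    simp only [hμ3]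
    rw [← Finset.sum_div, Finset.sum_add_distrib, a3, b3]
    norm_num
  have heta3 : ∀ e, eta Γ μ3 e = (eta Γ μ1 e + eta Γ μ2 e)/2 := by
    intro e
    unfold eta
    rw [← Finset.sum_div, Finset.sum_add_distrib]
  have hEO3 : EO Γ μ3 = (EO Γ μ1 + EO Γ μ2)/2
      - ∑ e : Sym2 V, ((eta Γ μ1 e - eta Γ μ2 e)/2)^2 := by
    rw [EO_eq_sum_sq, EO_eq_sum_sq, EO_eq_sum_sq]
    have hpt : ∀ e : Sym2 V, (eta Γ μ3 e)^2 =
        ((eta Γ μ1 e)^2 + (eta Γ μ2 e)^2)/2 - ((eta Γ μ1 e - eta Γ μ2 e)/2)^2 := by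
      intro e; rw [heta3 e]; ring
    simp_rw [hpt]
    rw [Finset.sum_sub_distrib, ← Finset.sum_div, Finset.sum_add_distrib]
  have hle12 := hopt1 μ2 h2
  have hle21 := hopt2 μ1 h1
  have heq : EO Γ μ1 = EO Γ μ2 := le_antisymm hle12 hle21
  have hle13 := hopt1 μ3 h3
  have hQ : ∑ e : Sym2 V, ((eta Γ μ1 e - eta Γ μ2 e)/2)^2 ≤ 0 := by
    rw [hEO3] at hle13
    linarith
  have hQ0 : ∀ e ∈ (Finset.univ : Finset (Sym2 V)), ((eta Γ μ1 e - eta Γ μ2 e)/2)^2 = 0 := by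
    intro e he
    have := Finset.sum_nonneg (fun e (_ : e ∈ (Finset.univ : Finset (Sym2 V))) =>
      sq_nonneg ((eta Γ μ1 e - eta Γ μ2 e)/2))
    have heq0 : ∑ e : Sym2 V, ((eta Γ μ1 e - eta Γ μ2 e)/2)^2 = 0 := le_antisymm hQ this
    exact (Finset.sum_eq_zero_iff_of_nonneg (fun e _ => sq_nonneg _)).mp heq0 e he
  intro e
  have := hQ0 e (Finset.mem_univ e)
  have h := pow_eq_zero_iff (n := 2) (by norm_num) |>.mp this
  linarith [h]

section Helpers

lemma frontier_lemma {F : Finset (Sym2 V)} (H : SimpleGraph V) {u : V} :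
    ∀ {p v : V} (_ : (SimpleGraph.fromEdgeSet (↑F : Set (Sym2 V))).Walk p v),
      H.Reachable u p → ¬ H.Reachable u v →
      ∃ a b, s(a,b) ∈ F ∧ H.Reachable u a ∧ ¬ H.Reachable u b := by
  intro p v w
  induction w with
  | nil => intro h1 h2; exact absurd h1 h2
  | @cons p c v h q ih =>
      intro h1 h2
      by_cases hc : H.Reachable u c
      · exact ih hc h2
      · exact ⟨p, c, ((SimpleGraph.fromEdgeSet_adj _).mp h).1, h1, hc⟩

lemma walk_closure {S T : Finset (Sym2 V)} {W : Finset V}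
    (hclosed : ∀ a ∈ W, ∀ b, s(a,b) ∈ S → b ∈ W)
    (hconv : ∀ a b, a ∈ W → b ∈ W → s(a,b) ∈ S → s(a,b) ∈ T) :
    ∀ {a b : V}, (SimpleGraph.fromEdgeSet (↑S : Set (Sym2 V))).Walk a b → a ∈ W →
      (SimpleGraph.fromEdgeSet (↑T : Set (Sym2 V))).Reachable a b ∧ b ∈ W := by
  intro a b w
  induction w with
  | nil => exact fun ha => ⟨SimpleGraph.Reachable.refl _, ha⟩
  | @cons a c b h q ih =>
      intro ha
      obtain ⟨hS, hne⟩ := (SimpleGraph.fromEdgeSet_adj _).mp h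
      have hcW : c ∈ W := hclosed a ha c hS
      have hadjT : (SimpleGraph.fromEdgeSet (↑T : Set (Sym2 V))).Adj a c :=
        (SimpleGraph.fromEdgeSet_adj _).mpr ⟨hconv a c ha hcW hS, hne⟩
      obtain ⟨hr, hbW⟩ := ih hcW
      exact ⟨hadjT.reachable.trans hr, hbW⟩

lemma reach_induce_of_walk {S : Finset (Sym2 V)} {W : Finset V} (G' : SimpleGraph V)
    (hSG : ∀ e ∈ S, e ∈ G'.edgeSet)
    (hclosed : ∀ a ∈ W, ∀ b, s(a,b) ∈ S → b ∈ W) :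
    ∀ {a b : V} (_ : (SimpleGraph.fromEdgeSet (↑S : Set (Sym2 V))).Walk a b) (ha : a ∈ W),
      ∃ (hb : b ∈ W), (G'.induce (↑W : Set V)).Reachable ⟨a, ha⟩ ⟨b, hb⟩ := by
  intro a b w
  induction w with
  | nil => intro ha; exact ⟨ha, SimpleGraph.Reachable.refl _⟩
  | @cons a c b h q ih =>
      intro ha
      obtain ⟨hS, hne⟩ := (SimpleGraph.fromEdgeSet_adj _).mp h
      have hcW : c ∈ W := hclosed a ha c hS
      obtain ⟨hbW, hr⟩ := ih hcW
      have hadj : (G'.induce (↑W : Set V)).Adj ⟨a, by exact_mod_cast ha⟩ ⟨c, by exact_mod_cast hcW⟩ := by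
        have : G'.Adj a c := (SimpleGraph.mem_edgeSet G').mp (hSG _ hS)
        exact this
      exact ⟨hbW, hadj.reachable.trans hr⟩

/-- The induced graph of an acyclic, `W`-connected edge set `τ` lying inside `W`
has exactly `W.card - 1` edges. -/
lemma card_of_induced_tree {τ : Finset (Sym2 V)} {W : Finset V}
    (hacy : (SimpleGraph.fromEdgeSet (↑τ : Set (Sym2 V))).IsAcyclic)
    (hin : ∀ e ∈ τ, ∀ v ∈ e, v ∈ W)
    (hnd : ∀ e ∈ τ, ¬ e.IsDiag)
    (hconn : ((SimpleGraph.fromEdgeSet (↑τ : Set (Sym2 V))).induce (↑W : Set V)).Connected) :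
    τ.card = W.card - 1 ∧ 1 ≤ W.card := by
  set R := SimpleGraph.fromEdgeSet (↑τ : Set (Sym2 V)) with hR
  set J := R.induce (↑W : Set V) with hJ
  let hhom : J →g R := ⟨fun u => u.val, fun {u v} hadj => hadj⟩
  have hJacy : J.IsAcyclic := by
    intro v c hc
    exact hacy (c.map hhom) (hc.map (fun a b h => Subtype.val_injective (by exact h)))
  have htree : J.IsTree := ⟨hconn, hJacy⟩
  haveI : Fintype J.edgeSet := Fintype.ofFinite J.edgeSet
  have hcard := htree.card_edgeFinset
  have hWc : Fintype.card (↑W : Set V) = W.card := by simp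
  have hbij : J.edgeFinset.card = τ.card := by
    apply Finset.card_bij (fun e _ => Sym2.map Subtype.val e)
    · intro e he
      induction e using Sym2.ind with | _ u v =>
      have hadj : J.Adj u v := SimpleGraph.mem_edgeFinset.mp he
      have : s(u.val, v.val) ∈ τ := ((SimpleGraph.fromEdgeSet_adj _).mp hadj).1
      rw [Sym2.map_pair_eq]
      exact this
    · intro e1 _ e2 _ heq
      exact Sym2.map.injective Subtype.val_injective heq
    · intro e he
      obtain ⟨a, b, rfl⟩ := sym2_ex e
      have ha : a ∈ W := hin _ he a (Sym2.mem_mk_left a b)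
      have hb : b ∈ W := hin _ he b (Sym2.mem_mk_right a b)
      have hne : a ≠ b := fun h => hnd _ he (by rw [h]; exact Sym2.mk_isDiag_iff.mpr rfl)
      have hadj : J.Adj ⟨a, by exact_mod_cast ha⟩ ⟨b, by exact_mod_cast hb⟩ := by
        have : R.Adj a b := (SimpleGraph.fromEdgeSet_adj _).mpr ⟨he, hne⟩
        exact this
      refine ⟨s(⟨a, by exact_mod_cast ha⟩, ⟨b, by exact_mod_cast hb⟩),
        SimpleGraph.mem_edgeFinset.mpr hadj, ?_⟩
      rw [Sym2.map_pair_eq]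
  constructor
  · omega
  · omega

end Helpers

/-- every finite connected graph with an edge admits a
homogeneous core: a connected vertex-induced subgraph `H` with at least one
edge such that every fair spanning tree of `G` restricts to a spanning tree
of `H`, and `H` is homogeneous. -/
theorem exists_homogeneous_core
    {V : Type*} [Fintype V] [DecidableEq V]
    (G : SimpleGraph V) (hG : G.Connected) (hE : G.edgeFinset.Nonempty) :
    ∃ W : Finset V,
      (G.induce (↑W : Set V)).Connected ∧
      (edgesWithin G W).Nonempty ∧
      (∀ γ, IsFair G γ → γ ∩ edgesWithin G W ∈ spanningTreesOn G W) ∧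
      (∃ μ, IsPmf (spanningTreesOn G W) μ ∧
        ∃ c : ℝ, ∀ e ∈ edgesWithin G W, eta (spanningTreesOn G W) μ e = c) := by
  classical
  haveI : Nonempty V := hG.nonempty
  set Γ := spanningTrees G with hΓdef
  have hΓne : Γ.Nonempty := by
    obtain ⟨γ₀, hsub, hconn, hcards⟩ := exists_spanning_tree_finset (G.edgeFinset.card)
      G.edgeFinset rfl
      (fun e he => G.not_isDiag_of_mem_edgeSet (SimpleGraph.mem_edgeFinset.mp he))
      (by rw [SimpleGraph.coe_edgeFinset, SimpleGraph.fromEdgeSet_edgeSet]; exact hG)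
    refine ⟨γ₀, mem_spanningTrees_iff.mpr ⟨?_, hconn, by omega⟩⟩
    intro f hf
    exact SimpleGraph.mem_edgeFinset.mp (hsub hf)
  obtain ⟨μs, hμs, hμopt⟩ := exists_optimal Γ hΓne
  set η : Sym2 V → ℝ := eta Γ μs with hη
  have hηnn : ∀ e, 0 ≤ η e := eta_nonneg Γ hμs.1
  have hKEY : ∀ γ, IsFair G γ → ∀ γ' ∈ Γ, ∑ e ∈ γ, η e ≤ ∑ e ∈ γ', η e := by
    intro γ hfair γ' hγ'
    obtain ⟨μ', hpmf', hopt', hpos'⟩ := fair_exists_opt hfair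
    have hγΓ : γ ∈ Γ := by
      by_contra h
      rw [hpmf'.2.1 γ h] at hpos'
      exact lt_irrefl _ hpos'
    have hle := opt_support_sum_le Γ hpmf' hopt' hγΓ hγ' hpos'
    have huniq := opt_eta_unique Γ hpmf' hμs hopt' hμopt
    calc ∑ e ∈ γ, η e = ∑ e ∈ γ, eta Γ μ' e :=
          Finset.sum_congr rfl fun e _ => (huniq e).symm
      _ ≤ ∑ e ∈ γ', eta Γ μ' e := hle
      _ = ∑ e ∈ γ', η e := Finset.sum_congr rfl fun e _ => huniq e
  have hμsMEO : EO Γ μs = MEO Γ := opt_EO_eq_MEO Γ hμs hμopt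
  have hsupp_fair : ∀ γ, 0 < μs γ → IsFair G γ := fun γ h => ⟨μs, hμs, hμsMEO, h⟩
  set m := (G.edgeFinset.image η).min' (hE.image η) with hm
  have hmle : ∀ e ∈ G.edgeFinset, m ≤ η e := fun e he =>
    Finset.min'_le _ _ (Finset.mem_image_of_mem η he)
  have hmmem := (G.edgeFinset.image η).min'_mem (hE.image η)
  rw [Finset.mem_image] at hmmem
  obtain ⟨f₀, hf₀E, hf₀m⟩ := hmmem
  have hm0 : 0 ≤ m := by rw [hm, ← hf₀m]; exact hηnn f₀
  set F := G.edgeFinset.filter (fun e => η e = m) with hF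
  have hFsubE : F ⊆ G.edgeFinset := Finset.filter_subset _ _
  have hf₀F : f₀ ∈ F := Finset.mem_filter.mpr ⟨hf₀E, hf₀m⟩
  set K := SimpleGraph.fromEdgeSet (↑F : Set (Sym2 V)) with hK
  obtain ⟨x₀, y₀, hf₀xy⟩ := sym2_ex f₀
  set W := Finset.univ.filter (fun v => K.Reachable x₀ v) with hW
  have hx₀W : x₀ ∈ W := by
    rw [hW, Finset.mem_filter]
    exact ⟨Finset.mem_univ _, SimpleGraph.Reachable.refl _⟩
  have hWclosed : ∀ a ∈ W, ∀ b, s(a,b) ∈ F → b ∈ W := by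
    intro a ha b hab
    have hne : a ≠ b :=
      ((SimpleGraph.mem_edgeSet G).mp (SimpleGraph.mem_edgeFinset.mp (hFsubE hab))).ne
    have hadj : K.Adj a b := (SimpleGraph.fromEdgeSet_adj _).mpr ⟨Finset.mem_coe.mpr hab, hne⟩
    rw [hW, Finset.mem_filter] at ha ⊢
    exact ⟨Finset.mem_univ _, ha.2.trans hadj.reachable⟩
  have hy₀W : y₀ ∈ W := by
    refine hWclosed x₀ hx₀W y₀ ?_
    rw [← hf₀xy]
    exact hf₀F
  have hWreach : ∀ v ∈ W, K.Reachable x₀ v := by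
    intro v hv
    rw [hW, Finset.mem_filter] at hv
    exact hv.2
  have hEWmem : ∀ {e : Sym2 V}, e ∈ edgesWithin G W ↔
      e ∈ G.edgeFinset ∧ ∀ v ∈ e, v ∈ W := by
    intro e
    simp only [edgesWithin, Finset.mem_filter]
  have hΓedge : ∀ {γ}, γ ∈ Γ → ∀ {e}, e ∈ γ → e ∈ G.edgeFinset := fun {γ} hγ {e} he =>
    SimpleGraph.mem_edgeFinset.mpr ((mem_spanningTrees_iff.mp hγ).1 he)
  -- CLAIM 1 : η is constant equal to m on edgesWithin G W
  have hclaim1 : ∀ e ∈ edgesWithin G W, η e = m := by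
    intro e heW
    obtain ⟨heE, heIn⟩ := hEWmem.mp heW
    by_contra hnem
    have hgt : m < η e := lt_of_le_of_ne (hmle e heE) (Ne.symm hnem)
    have hex : ∃ γ ∈ Γ.filter (fun δ => e ∈ δ), 0 < μs γ := by
      by_contra hno
      push_neg at hno
      have h1 : η e ≤ 0 := Finset.sum_nonpos (fun δ hδ => hno δ hδ)
      have h2 : 0 < η e := lt_of_le_of_lt hm0 hgt
      linarith
    obtain ⟨γ, hγf, hγpos⟩ := hex
    obtain ⟨hγΓ, heγ⟩ := Finset.mem_filter.mp hγf
    obtain ⟨x, y, hexy⟩ := sym2_ex e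
    subst hexy
    have hxW : x ∈ W := heIn x (Sym2.mem_mk_left x y)
    have hyW : y ∈ W := heIn y (Sym2.mem_mk_right x y)
    have hxyne : x ≠ y :=
      ((SimpleGraph.mem_edgeSet G).mp (SimpleGraph.mem_edgeFinset.mp heE)).ne
    obtain ⟨wK⟩ := (hWreach x hxW).symm.trans (hWreach y hyW)
    set T' := SimpleGraph.fromEdgeSet (↑(γ.erase s(x,y)) : Set (Sym2 V)) with hT'
    have hbridge : ¬ T'.Reachable x y := tree_bridge hγΓ heγ hxyne
    obtain ⟨a, b, habF, hra, hrb⟩ :=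
      frontier_lemma T' wK (SimpleGraph.Reachable.refl x) hbridge
    have habE : s(a,b) ∈ G.edgeFinset := hFsubE habF
    have hfne : a ≠ b := ((SimpleGraph.mem_edgeSet G).mp
      (SimpleGraph.mem_edgeFinset.mp habE)).ne
    have hfm : η s(a,b) = m := (Finset.mem_filter.mp habF).2
    have hfnotin : s(a,b) ∉ γ := by
      intro hmem
      have hfe : s(a,b) ≠ s(x,y) := fun h => by rw [h] at hfm; linarith
      apply hrb
      refine hra.trans (SimpleGraph.Adj.reachable ?_)
      exact (SimpleGraph.fromEdgeSet_adj _).mpr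
        ⟨Finset.mem_coe.mpr (Finset.mem_erase.mpr ⟨hfe, hmem⟩), hfne⟩
    have hnrab : ¬ T'.Reachable a b := fun h => hrb (hra.trans h)
    have hswap := swap_mem hγΓ heγ (SimpleGraph.mem_edgeFinset.mp habE) hfnotin hnrab
    have hKEY2 := opt_support_sum_le Γ hμs hμopt hγΓ hswap hγpos
    have hnotmem : s(a,b) ∉ γ.erase s(x,y) := fun h => hfnotin (Finset.mem_of_mem_erase h)
    rw [Finset.sum_insert hnotmem, Finset.sum_erase_eq_sub heγ] at hKEY2
    rw [← hη] at hKEY2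
    rw [hfm] at hKEY2
    linarith
  -- CLAIM 2 : every fair tree restricts to a spanning tree of G[W]
  have hrestrict : ∀ γ, IsFair G γ → γ ∩ edgesWithin G W ∈ spanningTreesOn G W := by
    intro γ hfair
    have hγΓ : γ ∈ Γ := by
      obtain ⟨μ', hpmf', _, hpos'⟩ := hfair
      by_contra h
      rw [hpmf'.2.1 γ h] at hpos'
      exact lt_irrefl _ hpos'
    have hγconn := (mem_spanningTrees_iff.mp hγΓ).2.1
    set τ := γ ∩ edgesWithin G W with hτ
    have hτin : ∀ e ∈ τ, ∀ v ∈ e, v ∈ W := by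
      intro e he v hv
      exact (hEWmem.mp (Finset.mem_inter.mp he).2).2 v hv
    have hτnd : ∀ e ∈ τ, ¬ e.IsDiag :=
      fun e he => tree_not_diag hγΓ (Finset.mem_inter.mp he).1
    have hpathF : ∀ a b : V, a ∈ W → b ∈ W → s(a,b) ∈ F →
        (SimpleGraph.fromEdgeSet (↑τ : Set (Sym2 V))).Reachable a b := by
      intro a b haW hbW habF
      have habE : s(a,b) ∈ G.edgeFinset := hFsubE habF
      have habmem : ∀ v ∈ s(a,b), v ∈ W := by
        intro v hv
        rcases Sym2.mem_iff.mp hv with rfl | rfl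
        · exact haW
        · exact hbW
      have hfne : a ≠ b := ((SimpleGraph.mem_edgeSet G).mp
        (SimpleGraph.mem_edgeFinset.mp habE)).ne
      by_cases hfγ : s(a,b) ∈ γ
      · have hmem : s(a,b) ∈ τ := Finset.mem_inter.mpr ⟨hfγ, hEWmem.mpr ⟨habE, habmem⟩⟩
        exact ((SimpleGraph.fromEdgeSet_adj _).mpr
          ⟨Finset.mem_coe.mpr hmem, hfne⟩).reachable
      · obtain ⟨wT⟩ := hγconn.preconnected a b
        set p := wT.toPath with hp
        have hpF : ∀ e ∈ (↑p : (SimpleGraph.fromEdgeSet (↑γ : Set (Sym2 V))).Walk a b).edges,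
            e ∈ γ ∩ F := by
          intro e hep
          have heγ : e ∈ γ := by
            have h := SimpleGraph.Walk.edges_subset_edgeSet _ hep
            rw [SimpleGraph.edgeSet_fromEdgeSet] at h
            exact h.1
          have heE : e ∈ G.edgeFinset := hΓedge hγΓ heγ
          obtain ⟨x, y, hexy⟩ := sym2_ex e
          subst hexy
          have hsep := path_edge_sep hγΓ _ p.2 _ hep
          have hswap := swap_mem hγΓ heγ (SimpleGraph.mem_edgeFinset.mp habE) hfγ hsep
          have hKEY2 := hKEY γ hfair _ hswap
          have hnotmem : s(a,b) ∉ γ.erase s(x,y) := fun h => hfγ (Finset.mem_of_mem_erase h)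
          rw [Finset.sum_insert hnotmem, Finset.sum_erase_eq_sub heγ] at hKEY2
          have hfm : η s(a,b) = m := (Finset.mem_filter.mp habF).2
          rw [hfm] at hKEY2
          have hxym : η s(x,y) = m := le_antisymm (by linarith) (hmle _ heE)
          exact Finset.mem_inter.mpr ⟨heγ, Finset.mem_filter.mpr ⟨heE, hxym⟩⟩
        have hreachγF : (SimpleGraph.fromEdgeSet (↑(γ ∩ F) : Set (Sym2 V))).Reachable a b := by
          refine ⟨(↑p : (SimpleGraph.fromEdgeSet (↑γ : Set (Sym2 V))).Walk a b).transfer _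
            (fun f hf => ?_)⟩
          exact mem_edgeSet_fromEdgeSet_finset (hpF f hf)
            (tree_not_diag hγΓ (Finset.mem_inter.mp (hpF f hf)).1)
        obtain ⟨w2⟩ := hreachγF
        refine (walk_closure (S := γ ∩ F) (T := τ) (W := W) ?_ ?_ w2 haW).1
        · intro a' ha' b' hab'
          exact hWclosed a' ha' b' (Finset.mem_inter.mp hab').2
        · intro a' b' ha' hb' hab'
          obtain ⟨h1, h2⟩ := Finset.mem_inter.mp hab'
          refine Finset.mem_inter.mpr ⟨h1, hEWmem.mpr ⟨hFsubE h2, ?_⟩⟩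
          intro v hv
          rcases Sym2.mem_iff.mp hv with rfl | rfl
          · exact ha'
          · exact hb'
    have hτwalk : ∀ {a b : V}, K.Walk a b → a ∈ W →
        (SimpleGraph.fromEdgeSet (↑τ : Set (Sym2 V))).Reachable a b ∧ b ∈ W := by
      intro a b w
      induction w with
      | nil => exact fun ha => ⟨SimpleGraph.Reachable.refl _, ha⟩
      | @cons a c b h q ih =>
          intro ha
          obtain ⟨hFm, hne⟩ := (SimpleGraph.fromEdgeSet_adj _).mp h
          have hcW : c ∈ W := hWclosed a ha c hFm
          obtain ⟨hr, hbW⟩ := ih hcW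
          exact ⟨(hpathF a c ha hcW hFm).trans hr, hbW⟩
    have hτreach : ∀ v ∈ W, (SimpleGraph.fromEdgeSet (↑τ : Set (Sym2 V))).Reachable x₀ v := by
      intro v hv
      obtain ⟨wK⟩ := hWreach v hv
      exact (hτwalk wK hx₀W).1
    have hτconn : ((SimpleGraph.fromEdgeSet (↑τ : Set (Sym2 V))).induce (↑W : Set V)).Connected := by
      haveI : Nonempty (↑W : Set V) := ⟨⟨x₀, hx₀W⟩⟩
      refine ⟨fun u v => ?_⟩
      obtain ⟨a, ha⟩ := u
      obtain ⟨b, hb⟩ := v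
      have haW : a ∈ W := ha
      have hbW : b ∈ W := hb
      obtain ⟨w3⟩ := (hτreach a haW).symm.trans (hτreach b hbW)
      obtain ⟨hbW', hri⟩ := reach_induce_of_walk
        (SimpleGraph.fromEdgeSet (↑τ : Set (Sym2 V)))
        (fun e he => mem_edgeSet_fromEdgeSet_finset he (hτnd e he))
        (fun a' ha' b' hab' => hτin _ hab' b' (Sym2.mem_mk_right a' b')) w3 haW
      exact hri
    have hleτγ : SimpleGraph.fromEdgeSet (↑τ : Set (Sym2 V)) ≤
        SimpleGraph.fromEdgeSet (↑γ : Set (Sym2 V)) :=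
      SimpleGraph.fromEdgeSet_mono (Finset.coe_subset.mpr Finset.inter_subset_left)
    have hacyτ : (SimpleGraph.fromEdgeSet (↑τ : Set (Sym2 V))).IsAcyclic := by
      intro v c hc
      exact tree_acyclic hγΓ (c.mapLe hleτγ)
        (by rw [SimpleGraph.Walk.mapLe_isCycle]; exact hc)
    obtain ⟨hcardτ, hWpos⟩ := card_of_induced_tree hacyτ hτin hτnd hτconn
    simp only [spanningTreesOn, Finset.mem_filter, Finset.mem_univ, true_and]
    exact ⟨Finset.inter_subset_right, hτconn, hcardτ⟩
  -- PART 1 : G[W] is connected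
  have hGWconn : (G.induce (↑W : Set V)).Connected := by
    haveI : Nonempty (↑W : Set V) := ⟨⟨x₀, hx₀W⟩⟩
    refine ⟨fun u v => ?_⟩
    obtain ⟨a, ha⟩ := u
    obtain ⟨b, hb⟩ := v
    have haW : a ∈ W := ha
    have hbW : b ∈ W := hb
    obtain ⟨w⟩ := (hWreach a haW).symm.trans (hWreach b hbW)
    obtain ⟨hbW', hri⟩ := reach_induce_of_walk G
      (fun e he => SimpleGraph.mem_edgeFinset.mp (hFsubE he))
      (fun a' ha' b' hab' => hWclosed a' ha' b' hab') w haW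
    exact hri
  -- PART 2 : edgesWithin G W is nonempty
  have hEWne : (edgesWithin G W).Nonempty := by
    refine ⟨f₀, hEWmem.mpr ⟨hf₀E, ?_⟩⟩
    intro v hv
    rw [hf₀xy] at hv
    rcases Sym2.mem_iff.mp hv with rfl | rfl
    · exact hx₀W
    · exact hy₀W
  -- PART 4 : homogeneity
  set ΓH := spanningTreesOn G W with hΓH
  set μH : Finset (Sym2 V) → ℝ :=
    fun τ' => ∑ γ ∈ Γ.filter (fun γ => γ ∩ edgesWithin G W = τ'), μs γ with hμH
  have hzero : ∀ γ ∈ Γ, γ ∩ edgesWithin G W ∉ ΓH → μs γ = 0 := by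
    intro γ hγ hnot
    by_contra h
    have hpos : 0 < μs γ := lt_of_le_of_ne (hμs.1 γ) (Ne.symm h)
    exact hnot (hrestrict γ (hsupp_fair γ hpos))
  have hμHpmf : IsPmf ΓH μH := by
    refine ⟨fun τ' => Finset.sum_nonneg (fun γ _ => hμs.1 γ), fun τ' hτ' => ?_, ?_⟩
    · refine Finset.sum_eq_zero (fun γ hγ => ?_)
      obtain ⟨hγΓ, heq⟩ := Finset.mem_filter.mp hγ
      exact hzero γ hγΓ (heq ▸ hτ')
    · have hfibeq : ∀ τ' ∈ ΓH, μH τ' =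
          ∑ γ ∈ (Γ.filter (fun γ => γ ∩ edgesWithin G W ∈ ΓH)).filter
            (fun γ => γ ∩ edgesWithin G W = τ'), μs γ := by
        intro τ' hτ'
        refine Finset.sum_congr ?_ (fun _ _ => rfl)
        rw [Finset.filter_filter]
        ext γ
        simp only [Finset.mem_filter]
        constructor
        · rintro ⟨h1, h2⟩
          exact ⟨h1, by rw [h2]; exact hτ', h2⟩
        · rintro ⟨h1, _, h3⟩
          exact ⟨h1, h3⟩
      calc ∑ τ' ∈ ΓH, μH τ'
          = ∑ τ' ∈ ΓH, ∑ γ ∈ (Γ.filter (fun γ => γ ∩ edgesWithin G W ∈ ΓH)).filter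
              (fun γ => γ ∩ edgesWithin G W = τ'), μs γ := Finset.sum_congr rfl hfibeq
        _ = ∑ γ ∈ Γ.filter (fun γ => γ ∩ edgesWithin G W ∈ ΓH), μs γ :=
            Finset.sum_fiberwise_of_maps_to (fun γ hγ => (Finset.mem_filter.mp hγ).2) μs
        _ = ∑ γ ∈ Γ, μs γ := by
            refine Finset.sum_subset (Finset.filter_subset _ _) (fun γ hγ hnγ => ?_)
            refine hzero γ hγ (fun hmem => hnγ ?_)
            exact Finset.mem_filter.mpr ⟨hγ, hmem⟩
        _ = 1 := hμs.2.2
  refine ⟨W, hGWconn, hEWne, hrestrict, μH, hμHpmf, m, ?_⟩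
  intro e heEW
  have heη : η e = m := hclaim1 e heEW
  set A := Γ.filter (fun γ => γ ∩ edgesWithin G W ∈ ΓH ∧ e ∈ γ) with hA
  have hetaH : eta ΓH μH e = ∑ γ ∈ A, μs γ := by
    unfold eta
    have hfibeq : ∀ τ' ∈ ΓH.filter (fun τ' => e ∈ τ'), μH τ' =
        ∑ γ ∈ A.filter (fun γ => γ ∩ edgesWithin G W = τ'), μs γ := by
      intro τ' hτ'
      obtain ⟨hτ'H, heτ'⟩ := Finset.mem_filter.mp hτ'
      refine Finset.sum_congr ?_ (fun _ _ => rfl)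
      rw [hA, Finset.filter_filter]
      ext γ
      simp only [Finset.mem_filter]
      constructor
      · rintro ⟨h1, h2⟩
        exact ⟨h1, ⟨by rw [h2]; exact hτ'H, by
          have : e ∈ γ ∩ edgesWithin G W := by rw [h2]; exact heτ'
          exact (Finset.mem_inter.mp this).1⟩, h2⟩
      · rintro ⟨h1, _, h3⟩
        exact ⟨h1, h3⟩
    calc ∑ τ' ∈ ΓH.filter (fun τ' => e ∈ τ'), μH τ'
        = ∑ τ' ∈ ΓH.filter (fun τ' => e ∈ τ'),
            ∑ γ ∈ A.filter (fun γ => γ ∩ edgesWithin G W = τ'), μs γ :=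
          Finset.sum_congr rfl hfibeq
      _ = ∑ γ ∈ A, μs γ := by
          refine Finset.sum_fiberwise_of_maps_to (fun γ hγ => ?_) μs
          obtain ⟨hγΓ, hγH, heγ⟩ := Finset.mem_filter.mp hγ
          refine Finset.mem_filter.mpr ⟨hγH, Finset.mem_inter.mpr ⟨heγ, heEW⟩⟩
  have hetaG : η e = ∑ γ ∈ A, μs γ := by
    rw [hη]
    unfold eta
    symm
    refine Finset.sum_subset ?_ (fun γ hγ hnγ => ?_)
    · intro γ hγ
      obtain ⟨h1, _, h3⟩ := Finset.mem_filter.mp hγ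
      exact Finset.mem_filter.mpr ⟨h1, h3⟩
    · obtain ⟨h1, h3⟩ := Finset.mem_filter.mp hγ
      refine hzero γ h1 (fun hmem => hnγ ?_)
      exact Finset.mem_filter.mpr ⟨h1, hmem, h3⟩
  rw [hetaH, ← hetaG, heη]
end Variational
end
end

section
/- Let G = (V,E) be a finite connected simple graph, let V_H ⊆ V be such that the induced subgraph H = G[V_H] is connected, and write E_H for the edge set of H. If γ ∈ Γ_G is a spanning tree of G whose restriction γ ∩ E_H is a spanning tree of H, then for every spanning tree γ_H' of H the set (γ \ E_H) ∪ γ_H' is a spanning tree of G whose restriction to E_H is γ_H'. Consequently, the set Γ* = {γ ∈ Γ_G : γ ∩ E_H ∈ Γ_H} satisfies Γ* = {γ_H ∪ S : γ_H ∈ Γ_H, S ∈ ψ₂(Γ*)}, where ψ₂(Γ*) = {γ \ E_H : γ ∈ Γ*}. -/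
noncomputable section
open scoped Classical
open Finset

variable {V : Type*} [Fintype V] [DecidableEq V]

/-!
Write `H = G[W]` and `E_H` for its edges. If `γ` is a spanning tree of `G` and `τ` one of `H`,
then `γ \ E_H` together with `τ` still connects `G`: an edge of `γ` lying in `E_H` has both
endpoints in `W`, where `τ` connects them. When `γ ∩ E_H` has `|W| - 1` edges, as `τ` does, the
swap also keeps the edge count `|V| - 1`. The splitting of `Γ*` is then set algebra: a family
closed under such swaps is the product of the possible traces with the outer parts.
-/

namespace SimpleGraph

variable {α : Type*} {G G' : SimpleGraph α}

lemma reachable_le_of_adj_le_reachable (h : G.Adj ≤ G'.Reachable) :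
    G.Reachable ≤ G'.Reachable := by
  simp only [reachable_eq_reflTransGen] at h ⊢
  exact Relation.reflTransGen_closed h

lemma Connected.of_adj_le_reachable (hG : G.Connected) (h : G.Adj ≤ G'.Reachable) :
    G'.Connected :=
  (connected_iff G').mpr
    ⟨fun u v => reachable_le_of_adj_le_reachable h u v (hG u v), hG.nonempty⟩

end SimpleGraph

namespace Finset

variable {α : Type*} [DecidableEq α]

lemma sdiff_union_inter_of_subset {s t E : Finset α} (ht : t ⊆ E) : (s \ E ∪ t) ∩ E = t := by
  rw [union_inter_distrib_right, sdiff_inter_self, inter_eq_left.mpr ht, empty_union]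

lemma filter_inter_mem_eq_image₂_union {Γ T : Finset (Finset α)} {E : Finset α}
    (hT : ∀ τ ∈ T, τ ⊆ E)
    (hΓ : ∀ γ ∈ Γ, γ ∩ E ∈ T → ∀ τ ∈ T, γ \ E ∪ τ ∈ Γ) :
    Γ.filter (fun γ => γ ∩ E ∈ T) =
      image₂ (· ∪ ·) T ((Γ.filter (fun γ => γ ∩ E ∈ T)).image (· \ E)) := by
  ext γ
  simp only [mem_filter, mem_image₂, mem_image]
  constructor
  · rintro ⟨hγ, hγE⟩
    exact ⟨γ ∩ E, hγE, γ \ E, ⟨γ, ⟨hγ, hγE⟩, rfl⟩, sup_inf_sdiff γ E⟩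
  · rintro ⟨τ, hτ, _, ⟨γ₀, ⟨hγ₀, hγ₀E⟩, rfl⟩, rfl⟩
    rw [union_comm, sdiff_union_inter_of_subset (hT τ hτ)]
    exact ⟨hΓ γ₀ hγ₀ hγ₀E τ hτ, hτ⟩

end Finset

section SpanningTrees

variable {G : SimpleGraph V} {W : Finset V} {τ : Finset (Sym2 V)}

lemma mem_spanningTreesOn : τ ∈ spanningTreesOn G W ↔ IsSpanningTreeOn G W τ := by
  simp [spanningTreesOn]

lemma IsSpanningTreeOn.subset_edgesWithin (hτ : IsSpanningTreeOn G W τ) :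
    τ ⊆ edgesWithin G W :=
  hτ.1

lemma IsSpanningTreeOn.reachable (hτ : IsSpanningTreeOn G W τ) {u v : V}
    (hu : u ∈ W) (hv : v ∈ W) :
    (SimpleGraph.fromEdgeSet (↑τ : Set (Sym2 V))).Reachable u v :=
  (hτ.2.1.preconnected ⟨u, hu⟩ ⟨v, hv⟩).map (SimpleGraph.Embedding.induce _).toHom

lemma edgesWithin_subset_edgeFinset : edgesWithin G W ⊆ G.edgeFinset :=
  filter_subset _ _

lemma mem_of_mem_edgesWithin {e : Sym2 V} (he : e ∈ edgesWithin G W) {v : V} (hv : v ∈ e) :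
    v ∈ W :=
  (mem_filter.mp he).2 v hv

lemma sdiff_union_mem_spanningTrees {γ : Finset (Sym2 V)} (hγ : γ ∈ spanningTrees G)
    (hγW : (γ ∩ edgesWithin G W).card = W.card - 1) (hτ : IsSpanningTreeOn G W τ) :
    γ \ edgesWithin G W ∪ τ ∈ spanningTrees G := by
  simp only [spanningTrees, mem_filter, mem_univ, true_and] at hγ ⊢
  obtain ⟨hγG, hγconn, hγcard⟩ := hγ
  refine ⟨?_, ?_, ?_⟩
  · rw [← SimpleGraph.coe_edgeFinset, coe_subset] at hγG ⊢
    exact union_subset (sdiff_subset.trans hγG)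
      (hτ.subset_edgesWithin.trans edgesWithin_subset_edgeFinset)
  · refine hγconn.of_adj_le_reachable fun u v huv => ?_
    rw [SimpleGraph.fromEdgeSet_adj, mem_coe] at huv
    by_cases huvW : s(u, v) ∈ edgesWithin G W
    · refine (hτ.reachable (mem_of_mem_edgesWithin huvW (Sym2.mem_mk_left u v))
        (mem_of_mem_edgesWithin huvW (Sym2.mem_mk_right u v))).mono ?_
      exact SimpleGraph.fromEdgeSet_mono (by simp)
    · exact SimpleGraph.Adj.reachable <| (SimpleGraph.fromEdgeSet_adj _).mpr
        ⟨mem_union_left _ (mem_sdiff.mpr ⟨huv.1, huvW⟩), huv.2⟩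
  · have hdisj : Disjoint (γ \ edgesWithin G W) τ :=
      disjoint_sdiff_self_left.mono_right hτ.subset_edgesWithin
    rw [card_union_of_disjoint hdisj, hτ.2.2, ← hγW, card_sdiff_add_card_inter, hγcard]

end SpanningTrees

theorem core_divides_spanning_trees_general
    {V : Type*} [Fintype V] [DecidableEq V]
    (G : SimpleGraph V)
    (W : Finset V) :
    (∀ γ ∈ spanningTrees G, γ ∩ edgesWithin G W ∈ spanningTreesOn G W →
      ∀ γH' ∈ spanningTreesOn G W,
        (γ \ edgesWithin G W) ∪ γH' ∈ spanningTrees G ∧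
        ((γ \ edgesWithin G W) ∪ γH') ∩ edgesWithin G W = γH') ∧
    ((spanningTrees G).filter (fun γ => γ ∩ edgesWithin G W ∈ spanningTreesOn G W) =
      Finset.image₂ (· ∪ ·) (spanningTreesOn G W)
        (((spanningTrees G).filter
            (fun γ => γ ∩ edgesWithin G W ∈ spanningTreesOn G W)).image
          (fun γ => γ \ edgesWithin G W))) := by
  have hexchange : ∀ γ ∈ spanningTrees G, γ ∩ edgesWithin G W ∈ spanningTreesOn G W →
      ∀ τ ∈ spanningTreesOn G W, γ \ edgesWithin G W ∪ τ ∈ spanningTrees G :=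
    fun γ hγ hγW τ hτ => sdiff_union_mem_spanningTrees hγ
      (mem_spanningTreesOn.mp hγW).2.2 (mem_spanningTreesOn.mp hτ)
  have hsubset : ∀ τ ∈ spanningTreesOn G W, τ ⊆ edgesWithin G W :=
    fun τ hτ => (mem_spanningTreesOn.mp hτ).subset_edgesWithin
  exact ⟨fun γ hγ hγW τ hτ =>
      ⟨hexchange γ hγ hγW τ hτ, sdiff_union_inter_of_subset (hsubset τ hτ)⟩,
    filter_inter_mem_eq_image₂_union hsubset hexchange⟩

/-- replacing the `H`-restriction of a spanning tree of `G` by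
any spanning tree of `H` again gives a spanning tree of `G`; consequently the
family `Γ* = {γ ∈ Γ_G : γ ∩ E_H ∈ Γ_H}` splits as
`Γ* = {γ_H ∪ S : γ_H ∈ Γ_H, S ∈ ψ₂(Γ*)}`. -/
theorem core_divides_spanning_trees
    {V : Type*} [Fintype V] [DecidableEq V]
    (G : SimpleGraph V) (hG : G.Connected)
    (W : Finset V) (hconn : (G.induce (↑W : Set V)).Connected) :
    (∀ γ ∈ spanningTrees G, γ ∩ edgesWithin G W ∈ spanningTreesOn G W →
      ∀ γH' ∈ spanningTreesOn G W,
        (γ \ edgesWithin G W) ∪ γH' ∈ spanningTrees G ∧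
        ((γ \ edgesWithin G W) ∪ γH') ∩ edgesWithin G W = γH') ∧
    ((spanningTrees G).filter (fun γ => γ ∩ edgesWithin G W ∈ spanningTreesOn G W) =
      Finset.image₂ (· ∪ ·) (spanningTreesOn G W)
        (((spanningTrees G).filter
            (fun γ => γ ∩ edgesWithin G W ∈ spanningTreesOn G W)).image
          (fun γ => γ \ edgesWithin G W))) :=
  core_divides_spanning_trees_general G W
end
end
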